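/- arXiv:2409.18604 — 3 statements merged into one kernel-verified Lean document; each statement's English description precedes it below -/
import Mathlib

section
/- Let g be a Lorentzian metric on ℝ^{1+n} satisfying condition (1.1) and condition (GH), and let τ be a Cauchy temporal function for g with level sets Σ_r = τ^{-1}(r). Then there is a function α : ℝ × {x ∈ ℝ^n : |x| ≥ 1} → ℝ, smooth in the sense of admitting local smooth extensions, such that Σ_r ∩ {(t,x) : |x| ≥ 1} = {(α(r,x), x) : |x| ≥ 1} for every r ∈ ℝ, and for each fixed x with |x| ≥ 1 the map r ↦ α(r,x) is strictly increasing and surjective onto ℝ. -/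
noncomputable section

open Set Filter Topology
open scoped RealInnerProductSpace

abbrev Evec (n : ℕ) : Type := EuclideanSpace ℝ (Fin n)
abbrev Vec (n : ℕ) : Type := ℝ × Evec n

/-- The Minkowski bilinear form on ℝ^{1+n}. -/
def mink {n : ℕ} (v w : Vec n) : ℝ := -(v.1 * w.1) + ⟪v.2, w.2⟫

/-- A Lorentzian metric on ℝ^{1+n}: a smooth assignment of nondegenerate symmetric
bilinear forms of signature (−,+,…,+). -/
structure LorentzMetric (n : ℕ) where
  g : Vec n → Vec n →L[ℝ] Vec n →L[ℝ] ℝ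
  smooth : ContDiff ℝ (⊤ : ℕ∞) g
  symm : ∀ p v w, g p v w = g p w v
  sig : ∀ p, ∃ L : Vec n ≃ₗ[ℝ] Vec n, ∀ v w, g p v w = mink (L v) (L w)

variable {n : ℕ}

def LorentzMetric.Timelike (M : LorentzMetric n) (p v : Vec n) : Prop := M.g p v v < 0
def LorentzMetric.CausalVec (M : LorentzMetric n) (p v : Vec n) : Prop := v ≠ 0 ∧ M.g p v v ≤ 0
def LorentzMetric.NullVec (M : LorentzMetric n) (p v : Vec n) : Prop := v ≠ 0 ∧ M.g p v v = 0

/-- A time orientation: a smooth everywhere timelike vector field. -/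
structure TimeOrientation {n : ℕ} (M : LorentzMetric n) where
  Z : Vec n → Vec n
  smooth : ContDiff ℝ (⊤ : ℕ∞) Z
  timelike : ∀ p, M.Timelike p (Z p)

def FutureDir (M : LorentzMetric n) (O : TimeOrientation M) (p v : Vec n) : Prop :=
  M.CausalVec p v ∧ M.g p v (O.Z p) < 0

def PastDir (M : LorentzMetric n) (O : TimeOrientation M) (p v : Vec n) : Prop :=
  M.CausalVec p v ∧ 0 < M.g p v (O.Z p)

/-- Condition (1.1): g = g_Min outside ℝ × B̄ and the time orientation is ∂_t there. -/
def Cond11 (M : LorentzMetric n) (O : TimeOrientation M) : Prop :=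
  ∀ p : Vec n, 1 < ‖p.2‖ → (∀ v w, M.g p v w = mink v w) ∧ O.Z p = ((1 : ℝ), (0 : Evec n))

/-- A piecewise smooth curve on [a,b] all of whose one-sided tangent vectors satisfy `Dir`. -/
def PiecewiseDirOn {n : ℕ} (Dir : Vec n → Vec n → Prop) (γ : ℝ → Vec n) (a b : ℝ) : Prop :=
  a < b ∧ ∃ (k : ℕ) (s : Fin (k + 1) → ℝ), s 0 = a ∧ s (Fin.last k) = b ∧ StrictMono s ∧
    ∀ i : Fin k, ContDiffOn ℝ (⊤ : ℕ∞) γ (Icc (s i.castSucc) (s i.succ)) ∧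
      ∀ r ∈ Icc (s i.castSucc) (s i.succ),
        Dir (γ r) (derivWithin γ (Icc (s i.castSucc) (s i.succ)) r)

def FutureCausalOn (M : LorentzMetric n) (O : TimeOrientation M) (γ : ℝ → Vec n) (a b : ℝ) : Prop :=
  PiecewiseDirOn (FutureDir M O) γ a b

def PastCausalOn (M : LorentzMetric n) (O : TimeOrientation M) (γ : ℝ → Vec n) (a b : ℝ) : Prop :=
  PiecewiseDirOn (PastDir M O) γ a b

def FutureTimelikeOn (M : LorentzMetric n) (O : TimeOrientation M) (γ : ℝ → Vec n) (a b : ℝ) : Prop :=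
  PiecewiseDirOn (fun p v => M.Timelike p v ∧ M.g p v (O.Z p) < 0) γ a b

def PastTimelikeOn (M : LorentzMetric n) (O : TimeOrientation M) (γ : ℝ → Vec n) (a b : ℝ) : Prop :=
  PiecewiseDirOn (fun p v => M.Timelike p v ∧ 0 < M.g p v (O.Z p)) γ a b

/-- The causal relation p ≤ q. -/
def CausalLE (M : LorentzMetric n) (O : TimeOrientation M) (p q : Vec n) : Prop :=
  p = q ∨ ∃ (γ : ℝ → Vec n) (a b : ℝ), FutureCausalOn M O γ a b ∧ γ a = p ∧ γ b = q

def Jplus (M : LorentzMetric n) (O : TimeOrientation M) (S : Set (Vec n)) : Set (Vec n) :=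
  {q | ∃ p ∈ S, CausalLE M O p q}

def Jminus (M : LorentzMetric n) (O : TimeOrientation M) (S : Set (Vec n)) : Set (Vec n) :=
  {q | ∃ p ∈ S, CausalLE M O q p}

/-- The filter of approach to an extended real endpoint from the right, within ℝ. -/
def rightLimFilter (a : EReal) : Filter ℝ :=
  Filter.comap (fun r : ℝ => (r : EReal)) (nhdsWithin a (Ioi a))

def leftLimFilter (b : EReal) : Filter ℝ :=
  Filter.comap (fun r : ℝ => (r : EReal)) (nhdsWithin b (Iio b))

/-- The open interval (a,b) of extended reals, as a set of reals. -/
def erealIoo (a b : EReal) : Set ℝ := {r : ℝ | a < (r : EReal) ∧ (r : EReal) < b}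

/-- A (future- or past-directed) timelike curve on the open interval (a,b). -/
def TimelikeCurve (M : LorentzMetric n) (O : TimeOrientation M) (γ : ℝ → Vec n) (a b : EReal) : Prop :=
  a < b ∧ ((∀ c d : ℝ, a < (c : EReal) → (d : EReal) < b → c < d → FutureTimelikeOn M O γ c d) ∨
           (∀ c d : ℝ, a < (c : EReal) → (d : EReal) < b → c < d → PastTimelikeOn M O γ c d))

/-- An inextendible timelike curve: no limit at either endpoint. -/
def InextTimelike (M : LorentzMetric n) (O : TimeOrientation M) (γ : ℝ → Vec n) (a b : EReal) : Prop :=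
  TimelikeCurve M O γ a b ∧ (¬ ∃ L, Tendsto γ (rightLimFilter a) (nhds L)) ∧
    (¬ ∃ L, Tendsto γ (leftLimFilter b) (nhds L))

/-- A Cauchy surface: met exactly once by every inextendible timelike curve. -/
def IsCauchySurface (M : LorentzMetric n) (O : TimeOrientation M) (S : Set (Vec n)) : Prop :=
  ∀ (γ : ℝ → Vec n) (a b : EReal), InextTimelike M O γ a b →
    ∃! r : ℝ, r ∈ erealIoo a b ∧ γ r ∈ S

/-- An inextendible future-directed causal curve. -/
def InextFutureCausal (M : LorentzMetric n) (O : TimeOrientation M) (γ : ℝ → Vec n) (a b : EReal) : Prop :=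
  a < b ∧ (∀ c d : ℝ, a < (c : EReal) → (d : EReal) < b → c < d → FutureCausalOn M O γ c d) ∧
  (¬ ∃ L, Tendsto γ (rightLimFilter a) (nhds L)) ∧ (¬ ∃ L, Tendsto γ (leftLimFilter b) (nhds L))

/-- A Cauchy temporal function. -/
structure CauchyTemporal {n : ℕ} (M : LorentzMetric n) (O : TimeOrientation M) where
  τ : Vec n → ℝ
  smooth : ContDiff ℝ (⊤ : ℕ∞) τ
  surj : Function.Surjective τ
  grad : Vec n → Vec n
  grad_spec : ∀ p w, M.g p (grad p) w = fderiv ℝ τ p w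
  grad_timelike : ∀ p, M.Timelike p (grad p)
  grad_past : ∀ p, PastDir M O p (grad p)
  level_conn : ∀ r : ℝ, IsConnected (τ ⁻¹' {r})
  level_spacelike : ∀ p v, v ≠ (0 : Vec n) → fderiv ℝ τ p v = 0 → 0 < M.g p v v
  level_cauchy : ∀ r : ℝ, IsCauchySurface M O (τ ⁻¹' {r})
  mono : ∀ (γ : ℝ → Vec n) (a b : EReal), InextFutureCausal M O γ a b →
    StrictMonoOn (fun r => τ (γ r)) (erealIoo a b) ∧
      (fun r => τ (γ r)) '' (erealIoo a b) = univ

/-- Condition (GH): no closed causal curves, compact causal diamonds, and existence of a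
Cauchy temporal function. -/
def CondGH (M : LorentzMetric n) (O : TimeOrientation M) : Prop :=
  (¬ ∃ (γ : ℝ → Vec n) (a b : ℝ),
      (FutureCausalOn M O γ a b ∨ PastCausalOn M O γ a b) ∧ γ a = γ b) ∧
  (∀ p q : Vec n, IsCompact (Jplus M O {p} ∩ Jminus M O {q})) ∧
  Nonempty (CauchyTemporal M O)

/-- Geodesic equation on a set, in coordinate-free form equivalent to
γ̈^k + Γ^k_{ij} γ̇^i γ̇^j = 0. -/
def IsGeodesicOn (M : LorentzMetric n) (γ : ℝ → Vec n) (s : Set ℝ) : Prop :=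
  ContDiffOn ℝ (⊤ : ℕ∞) γ s ∧ ∀ r ∈ s, ∀ u : Vec n,
    M.g (γ r) (derivWithin (fun t => derivWithin γ s t) s r) u
      + (fderiv ℝ M.g (γ r)) (derivWithin γ s r) (derivWithin γ s r) u
      - (1 / 2) * ((fderiv ℝ M.g (γ r)) u) (derivWithin γ s r) (derivWithin γ s r) = 0

def SigMinus {n : ℕ} (ω : Evec n) : Set (Vec n) := {p | ⟪p.2, ω⟫ = -1}
def SigPlus {n : ℕ} (ω : Evec n) : Set (Vec n) := {p | ⟪p.2, ω⟫ = 1}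
def SigMinusAt {n : ℕ} (ω : Evec n) (σ : ℝ) : Set (Vec n) := {p | p.1 = σ ∧ ⟪p.2, ω⟫ = -1}
def SigPlusAt {n : ℕ} (ω : Evec n) (σ : ℝ) : Set (Vec n) := {p | p.1 = σ ∧ ⟪p.2, ω⟫ = 1}

/-- The family of maximal geodesics γ_z, z ∈ Σ₋, with γ_z(0) = z, γ̇_z(0) = (1,ω),
defined on (−∞, ρ(z)). -/
structure GeodesicFamily {n : ℕ} (M : LorentzMetric n) (ω : Evec n) where
  ρ : Vec n → EReal
  γ : Vec n → ℝ → Vec n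
  ρ_pos : ∀ z ∈ SigMinus ω, 0 < ρ z
  geo : ∀ z ∈ SigMinus ω, IsGeodesicOn M (γ z) {r : ℝ | (r : EReal) < ρ z}
  init : ∀ z ∈ SigMinus ω, γ z 0 = z
  init' : ∀ z ∈ SigMinus ω, deriv (γ z) 0 = ((1 : ℝ), ω)
  maximal : ∀ z ∈ SigMinus ω, ∀ (b : EReal) (η : ℝ → Vec n),
    IsGeodesicOn M η {r : ℝ | (r : EReal) < b} → η 0 = z → deriv η 0 = ((1 : ℝ), ω) → b ≤ ρ z

/-- The exit time r₊(z) = sup{r < ρ(z) : γ_z([0,r]) ⊆ {x·ω ≤ 1}}. -/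
def exitTime {n : ℕ} {M : LorentzMetric n} {ω : Evec n} (F : GeodesicFamily M ω) (z : Vec n) : EReal :=
  sSup ((fun r : ℝ => (r : EReal)) ''
    {r : ℝ | (r : EReal) < F.ρ z ∧ ∀ s ∈ Icc (0 : ℝ) r, ⟪(F.γ z s).2, ω⟫ ≤ 1})

/-- The trapped set 𝒯_g. -/
def Trapped {n : ℕ} {M : LorentzMetric n} {ω : Evec n} (F : GeodesicFamily M ω) : Set (Vec n) :=
  {z | z ∈ SigMinus ω ∧ exitTime F z = F.ρ z}

/-- The SPW scattering hypothesis for the weight λ. -/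
def SPW {n : ℕ} (M : LorentzMetric n) (ω : Evec n) (F : GeodesicFamily M ω) (lam : Vec n → ℝ) : Prop :=
  ∀ σ : ℝ,
    {p : Vec n × Vec n | ∃ z ∈ SigMinusAt ω σ, z ∉ Trapped F ∧
        p = (F.γ z (exitTime F z).toReal, deriv (F.γ z) (exitTime F z).toReal)}
    = {p : Vec n × Vec n | ∃ w ∈ SigPlusAt ω (σ + 2), p = (w, lam w • ((1 : ℝ), ω))}

/-- A diffeomorphism between subsets of normed spaces. -/
def IsDiffeoOn {X Y : Type*} [NormedAddCommGroup X] [NormedSpace ℝ X]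
    [NormedAddCommGroup Y] [NormedSpace ℝ Y] (F : X → Y) (s : Set X) (t : Set Y) : Prop :=
  ContDiffOn ℝ (⊤ : ℕ∞) F s ∧ Set.BijOn F s t ∧
    ∃ G : Y → X, ContDiffOn ℝ (⊤ : ℕ∞) G t ∧ (∀ x ∈ s, G (F x) = x) ∧ ∀ y ∈ t, F (G y) = y

/-- The eikonal equation g(dφ, dφ) = 0. -/
def Eikonal (M : LorentzMetric n) (φ : Vec n → ℝ) : Prop :=
  ∀ p, ∃ X : Vec n, (∀ w, M.g p X w = fderiv ℝ φ p w) ∧ M.g p X X = 0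

/-- X = (dF)^♯, the g-gradient of F. -/
def IsGGrad (M : LorentzMetric n) (F : Vec n → ℝ) (X : Vec n → Vec n) : Prop :=
  ∀ p w, M.g p (X p) w = fderiv ℝ F p w

/-- Future-directed causal vectors for the Minkowski metric with orientation ∂_t. -/
def MinFutureDir {n : ℕ} (v : Vec n) : Prop := (v ≠ 0 ∧ mink v v ≤ 0) ∧ 0 < v.1

def CausalLEMin {n : ℕ} (p q : Vec n) : Prop :=
  p = q ∨ ∃ (γ : ℝ → Vec n) (a b : ℝ),
    PiecewiseDirOn (fun _ v => MinFutureDir v) γ a b ∧ γ a = p ∧ γ b = q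

/-- Causal past for the Minkowski metric. -/
def JminusMin {n : ℕ} (S : Set (Vec n)) : Set (Vec n) := {q | ∃ p ∈ S, CausalLEMin q p}

/-- The coordinate pairing between covectors (identified with vectors) and vectors. -/
def cdot {n : ℕ} (v w : Vec n) : ℝ := v.1 * w.1 + ⟪v.2, w.2⟫


section MyHelpers

variable {n : ℕ}

lemma myRightLimFilter_bot : rightLimFilter ⊥ = (atBot : Filter ℝ) := by
  have h1 : (Ioi (⊥ : EReal)) = {(⊥ : EReal)}ᶜ := by
    ext x; simp [bot_lt_iff_ne_bot]
  rw [rightLimFilter, h1,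
    show nhdsWithin (⊥ : EReal) {(⊥:EReal)}ᶜ = 𝓝[≠] (⊥:EReal) from rfl,
    EReal.nhdsWithin_bot]
  exact Filter.comap_map EReal.coe_injective

lemma myLeftLimFilter_top : leftLimFilter ⊤ = (atTop : Filter ℝ) := by
  have h1 : (Iio (⊤ : EReal)) = {(⊤ : EReal)}ᶜ := by
    ext x; simp [lt_top_iff_ne_top]
  rw [leftLimFilter, h1,
    show nhdsWithin (⊤ : EReal) {(⊤:EReal)}ᶜ = 𝓝[≠] (⊤:EReal) from rfl,
    EReal.nhdsWithin_top]
  exact Filter.comap_map EReal.coe_injective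

lemma myBoundaryLimit {X : Type*} [TopologicalSpace X] [T2Space X]
    (f : Vec n → X) (c : X) (hf : Continuous f)
    (h : ∀ q : Vec n, 1 < ‖q.2‖ → f q = c) (p : Vec n) (hp : 1 ≤ ‖p.2‖) :
    f p = c := by
  have hcurve : Continuous (fun s : ℝ => f (p.1, s • p.2)) := by
    apply hf.comp; exact continuous_const.prodMk (continuous_id.smul continuous_const)
  have hne : ∀ s ∈ Ioi (1:ℝ), f (p.1, s • p.2) = c := by
    intro s hs
    apply h
    have : ‖(s • p.2)‖ = |s| * ‖p.2‖ := by rw [norm_smul]; rfl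
    simp only [this]
    rw [abs_of_pos (lt_trans one_pos hs)]
    nlinarith [mem_Ioi.mp hs]
  have hT : Tendsto (fun s : ℝ => f (p.1, s • p.2)) (𝓝[>] (1:ℝ)) (𝓝 (f (p.1, (1:ℝ) • p.2))) :=
    (hcurve.tendsto 1).mono_left nhdsWithin_le_nhds
  have hT2 : Tendsto (fun s : ℝ => f (p.1, s • p.2)) (𝓝[>] (1:ℝ)) (𝓝 c) := by
    apply Tendsto.congr' _ tendsto_const_nhds
    filter_upwards [self_mem_nhdsWithin] with s hs using (hne s hs).symm
  have := tendsto_nhds_unique hT hT2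
  simpa using this

/-- Outside (and on the boundary of) the cylinder, g = mink and Z = ∂ₜ. -/
lemma myOutside {M : LorentzMetric n} {O : TimeOrientation M} (h11 : Cond11 M O)
    (p : Vec n) (hp : 1 ≤ ‖p.2‖) :
    (∀ v w, M.g p v w = mink v w) ∧ O.Z p = ((1 : ℝ), (0 : Evec n)) := by
  constructor
  · intro v w
    have hc : Continuous (fun q : Vec n => M.g q v w) :=
      ((M.smooth.clm_apply contDiff_const).clm_apply contDiff_const).continuous
    exact myBoundaryLimit _ _ hc (fun q hq => (h11 q hq).1 v w) p hp
  · exact myBoundaryLimit _ _ O.smooth.continuous (fun q hq => (h11 q hq).2) p hp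

end MyHelpers

section MyHelpers2

variable {n : ℕ}

lemma myVertInext {M : LorentzMetric n} {O : TimeOrientation M} (h11 : Cond11 M O)
    (x : Evec n) (hx : 1 ≤ ‖x‖) :
    InextFutureCausal M O (fun t : ℝ => ((t, x) : Vec n)) ⊥ ⊤ := by
  have hout : ∀ t : ℝ, (∀ v w, M.g (t, x) v w = mink v w) ∧
      O.Z (t, x) = ((1 : ℝ), (0 : Evec n)) := fun t => myOutside h11 (t, x) hx
  refine ⟨bot_lt_top, ?_, ?_, ?_⟩
  · intro c d _ _ hcd
    refine ⟨hcd, 1, ![c, d], rfl, rfl, ?_, ?_⟩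
    · rw [Fin.strictMono_iff_lt_succ]
      intro i
      have : i = 0 := Subsingleton.elim _ _
      subst this
      simpa using hcd
    · intro i
      have hi : i = 0 := Subsingleton.elim _ _
      subst hi
      have hIcc : Icc ((![c, d]) (Fin.castSucc 0)) ((![c, d]) (Fin.succ 0)) = Icc c d := rfl
      rw [hIcc]
      refine ⟨(contDiff_id.prodMk contDiff_const).contDiffOn, ?_⟩
      intro r hr
      have hder : derivWithin (fun t : ℝ => ((t, x) : Vec n)) (Icc c d) r
          = ((1 : ℝ), (0 : Evec n)) := by
        have h1 : HasDerivAt (fun t : ℝ => ((t, x) : Vec n)) ((1 : ℝ), (0 : Evec n)) r :=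
          (hasDerivAt_id r).prodMk (hasDerivAt_const r x)
        exact h1.hasDerivWithinAt.derivWithin (uniqueDiffOn_Icc hcd r hr)
      rw [hder]
      have hne : ((1 : ℝ), (0 : Evec n)) ≠ (0 : Vec n) := by
        intro h; exact one_ne_zero (congrArg Prod.fst h)
      have hg := (hout r).1
      have hm : mink ((1:ℝ), (0:Evec n)) ((1:ℝ), (0:Evec n)) = -1 := by
        simp [mink]
      refine ⟨⟨hne, ?_⟩, ?_⟩
      · rw [hg, hm]; norm_num
      · rw [(hout r).2, hg, hm]; norm_num
  · rintro ⟨L, hL⟩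
    rw [myRightLimFilter_bot] at hL
    have h1 : Tendsto (fun t : ℝ => t) atBot (𝓝 L.1) := (continuous_fst.tendsto L).comp hL
    exact not_tendsto_atBot_of_tendsto_nhds h1 tendsto_id
  · rintro ⟨L, hL⟩
    rw [myLeftLimFilter_top] at hL
    have h1 : Tendsto (fun t : ℝ => t) atTop (𝓝 L.1) := (continuous_fst.tendsto L).comp hL
    exact not_tendsto_atTop_of_tendsto_nhds h1 tendsto_id

lemma myVertMono {M : LorentzMetric n} {O : TimeOrientation M} (h11 : Cond11 M O)
    (T : CauchyTemporal M O) (x : Evec n) (hx : 1 ≤ ‖x‖) :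
    StrictMono (fun t : ℝ => T.τ (t, x)) ∧ Function.Surjective (fun t : ℝ => T.τ (t, x)) := by
  have h := T.mono (fun t : ℝ => ((t, x) : Vec n)) ⊥ ⊤ (myVertInext h11 x hx)
  have huniv : erealIoo ⊥ ⊤ = (univ : Set ℝ) := by
    ext r; simp [erealIoo]
  rw [huniv] at h
  obtain ⟨h1, h2⟩ := h
  rw [image_univ, range_eq_univ] at h2
  exact ⟨strictMonoOn_univ.mp h1, h2⟩

end MyHelpers2

/-- Lemma 2.7: the level sets of a Cauchy temporal function outside the cylinder are
graphs t = α(r,x), with α smooth, strictly increasing and onto in r. -/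
theorem level_sets_are_graphs_outside_cylinder (n : ℕ) (hn : 2 ≤ n)
    (M : LorentzMetric n) (O : TimeOrientation M)
    (h11 : Cond11 M O) (hGH : CondGH M O) (T : CauchyTemporal M O) :
    ∃ α : ℝ × Evec n → ℝ,
      ContDiffOn ℝ (⊤ : ℕ∞) α {q : ℝ × Evec n | 1 ≤ ‖q.2‖} ∧
      (∀ r : ℝ, {p : Vec n | T.τ p = r ∧ 1 ≤ ‖p.2‖}
          = {p : Vec n | ∃ x : Evec n, 1 ≤ ‖x‖ ∧ p = (α (r, x), x)}) ∧
      (∀ x : Evec n, 1 ≤ ‖x‖ →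
        StrictMono (fun r : ℝ => α (r, x)) ∧ Function.Surjective (fun r : ℝ => α (r, x))) := by
  classical
  have hvert := fun (x : Evec n) (hx : 1 ≤ ‖x‖) => myVertMono h11 T x hx
  set α : ℝ × Evec n → ℝ := fun q => Classical.epsilon (fun t : ℝ => T.τ (t, q.2) = q.1) with hα
  have hspec : ∀ q : ℝ × Evec n, 1 ≤ ‖q.2‖ → T.τ (α q, q.2) = q.1 := by
    intro q hq
    exact Classical.epsilon_spec ((hvert q.2 hq).2 q.1)
  have huniq : ∀ q : ℝ × Evec n, 1 ≤ ‖q.2‖ → ∀ t : ℝ, T.τ (t, q.2) = q.1 → t = α q := by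
    intro q hq t ht
    exact (hvert q.2 hq).1.injective (by rw [ht, hspec q hq])
  refine ⟨α, ?_, ?_, ?_⟩
  · -- smoothness
    intro q₀ hq₀
    have hq₀' : 1 ≤ ‖q₀.2‖ := hq₀
    set p₀ : Vec n := (α q₀, q₀.2) with hp₀
    have hp₀2 : 1 ≤ ‖p₀.2‖ := hq₀'
    set D : Vec n →L[ℝ] ℝ := fderiv ℝ T.τ p₀ with hD
    have hc : 0 < D ((1 : ℝ), (0 : Evec n)) := by
      have h1 := (T.grad_past p₀).2
      rw [(myOutside h11 p₀ hp₀2).2] at h1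
      rw [hD, ← T.grad_spec p₀ ((1 : ℝ), (0 : Evec n))]
      exact h1
    set c : ℝ := D ((1 : ℝ), (0 : Evec n)) with hcdef
    have hc0 : c ≠ 0 := ne_of_gt hc
    have hDv : ∀ v : Vec n, D v = v.1 * c + D (0, v.2) := by
      intro v
      have hv : v = v.1 • (((1:ℝ), (0:Evec n)) : Vec n) + ((0 : ℝ), v.2) := by
        ext
        · simp
        · simp
      calc D v = D (v.1 • (((1:ℝ), (0:Evec n)) : Vec n) + ((0 : ℝ), v.2)) := by rw [← hv]
        _ = v.1 * c + D (0, v.2) := by rw [map_add, map_smul, smul_eq_mul]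
    set A : Vec n →L[ℝ] Vec n := D.prod (ContinuousLinearMap.snd ℝ ℝ (Evec n)) with hA
    set Bc : Vec n →L[ℝ] Vec n :=
      (c⁻¹ • (ContinuousLinearMap.fst ℝ ℝ (Evec n) -
        D.comp ((ContinuousLinearMap.inr ℝ ℝ (Evec n)).comp
          (ContinuousLinearMap.snd ℝ ℝ (Evec n))))).prod
        (ContinuousLinearMap.snd ℝ ℝ (Evec n)) with hB
    have hBA : Function.LeftInverse Bc A := by
      intro v
      show (c⁻¹ * (D v - D (0, v.2)), v.2) = v
      rw [hDv v]
      have : c⁻¹ * (v.1 * c + D (0, v.2) - D (0, v.2)) = v.1 := by field_simp; ring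
      rw [this]
    have hAB : Function.RightInverse Bc A := by
      intro w
      show (D (c⁻¹ * (w.1 - D (0, w.2)), w.2), w.2) = w
      rw [hDv (c⁻¹ * (w.1 - D (0, w.2)), w.2)]
      have : c⁻¹ * (w.1 - D (0, w.2)) * c + D (0, w.2) = w.1 := by field_simp; ring
      rw [this]
    set E : Vec n ≃L[ℝ] Vec n := ContinuousLinearEquiv.equivOfInverse A Bc hBA hAB with hE
    set Φ : Vec n → Vec n := fun p => ((T.τ p, p.2) : Vec n) with hΦ
    have hΦc : ContDiffAt ℝ (⊤ : ℕ∞) Φ p₀ := by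
      rw [hΦ]; exact (T.smooth.prodMk contDiff_snd).contDiffAt
    have hΦd : HasFDerivAt Φ (E : Vec n →L[ℝ] Vec n) p₀ := by
      rw [hΦ]
      have hτd : HasFDerivAt T.τ D p₀ :=
        (T.smooth.differentiable (by simp)).differentiableAt.hasFDerivAt
      exact hτd.prodMk hasFDerivAt_snd
    have hΦp₀ : Φ p₀ = q₀ := by
      rw [hΦ]
      exact Prod.ext (hspec q₀ hq₀') rfl
    set G : Vec n → Vec n := hΦc.localInverse hΦd (by simp) with hG
    have hGc : ContDiffAt ℝ (⊤ : ℕ∞) G q₀ := by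
      have := hΦc.to_localInverse (f' := E) hΦd (by simp)
      rwa [hΦp₀] at this
    have hev : ∀ᶠ y in 𝓝 q₀, Φ (G y) = y := by
      have := (hΦc.hasStrictFDerivAt' hΦd (by simp)).eventually_right_inverse
      rwa [hΦp₀] at this
    have hβ : ContDiffAt ℝ (⊤ : ℕ∞) (fun y : ℝ × Evec n => (G y).1) q₀ :=
      contDiff_fst.contDiffAt.comp q₀ hGc
    refine (hβ.contDiffWithinAt).congr_of_eventuallyEq ?_ ?_
    · filter_upwards [hev.filter_mono nhdsWithin_le_nhds, self_mem_nhdsWithin] with q hq hqS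
      rw [Prod.ext_iff] at hq
      have h2 : (G q).2 = q.2 := hq.2
      have h1 : T.τ (G q) = q.1 := hq.1
      have h3 : T.τ ((G q).1, q.2) = q.1 := by rw [← h2]; simpa using h1
      exact (huniq q hqS (G q).1 h3).symm
    · have hq : G q₀ = p₀ := by
        have := hΦc.localInverse_apply_image hΦd (by simp)
        rwa [hΦp₀] at this
      show α q₀ = (G q₀).1
      rw [hq]
  · -- level sets are graphs
    intro r
    ext p
    simp only [mem_setOf_eq]
    constructor
    · rintro ⟨hτ, hp⟩
      refine ⟨p.2, hp, ?_⟩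
      have h1 : p.1 = α (r, p.2) := huniq (r, p.2) hp p.1 (by simpa using hτ)
      exact Prod.ext h1 rfl
    · rintro ⟨x, hx, rfl⟩
      exact ⟨hspec (r, x) hx, hx⟩
  · intro x hx
    obtain ⟨hmono, hsurj⟩ := hvert x hx
    constructor
    · intro r r' hrr'
      apply hmono.lt_iff_lt.mp
      show T.τ (α (r, x), x) < T.τ (α (r', x), x)
      rw [hspec (r, x) hx, hspec (r', x) hx]
      exact hrr'
    · intro t
      exact ⟨T.τ (t, x), (huniq (T.τ (t, x), x) hx t rfl).symm⟩

end
end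

section
/- Let g be a Lorentzian metric on ℝ^{1+n} satisfying condition (1.1) and condition (GH). Then for every t₀ ∈ ℝ, every inextendible timelike curve meets the set {(t,x) ∈ ℝ^{1+n} : t = t₀}. -/
noncomputable section

open Set Filter Topology
open scoped RealInnerProductSpace

variable {n : ℕ}

/- ===== Auxiliary lemmas for Lemma 2.6 ===== -/

section Aux

variable {n : ℕ}

lemma L26_mink_self (v : Vec n) : mink v v = -(v.1 * v.1) + ‖v.2‖ ^ 2 := by
  rw [mink, real_inner_self_eq_norm_sq]

lemma L26_mink_dt (v : Vec n) : mink v ((1 : ℝ), (0 : Evec n)) = -v.1 := by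
  simp [mink]

lemma L26_timelike_bound {v : Vec n} (h : mink v v < 0) : ‖v.2‖ < |v.1| := by
  have h1 := L26_mink_self v
  have h2 : ‖v.2‖ ^ 2 < |v.1| ^ 2 := by
    rw [sq_abs]; nlinarith
  exact lt_of_pow_lt_pow_left₀ 2 (abs_nonneg v.1) h2

lemma L26_mink_pos_of_opp {u v : Vec n} (hu : mink u u < 0) (hv : mink v v < 0)
    (hs : u.1 * v.1 < 0) : 0 < mink u v := by
  have h1 := L26_timelike_bound hu
  have h2 := L26_timelike_bound hv
  have h3 : |⟪u.2, v.2⟫| ≤ ‖u.2‖ * ‖v.2‖ := abs_real_inner_le_norm _ _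
  have h4 : |u.1| * |v.1| = -(u.1 * v.1) := by
    rw [← abs_mul, abs_of_neg hs]
  rw [mink]
  nlinarith [abs_nonneg u.1, abs_nonneg v.1, norm_nonneg u.2, norm_nonneg v.2,
    abs_le.1 h3]

lemma L26_mink_neg_of_same {u v : Vec n} (hu : mink u u < 0) (hv : mink v v < 0)
    (hs : 0 < u.1 * v.1) : mink u v < 0 := by
  have h1 := L26_timelike_bound hu
  have h2 := L26_timelike_bound hv
  have h3 : |⟪u.2, v.2⟫| ≤ ‖u.2‖ * ‖v.2‖ := abs_real_inner_le_norm _ _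
  have h4 : |u.1| * |v.1| = u.1 * v.1 := by
    rw [← abs_mul, abs_of_pos hs]
  rw [mink]
  nlinarith [abs_nonneg u.1, abs_nonneg v.1, norm_nonneg u.2, norm_nonneg v.2,
    abs_le.1 h3]

/-- Extension of condition (1.1) to the closed exterior region `1 ≤ ‖x‖`. -/
lemma L26_cond11_ext {M : LorentzMetric n} {O : TimeOrientation M} (h11 : Cond11 M O)
    {p : Vec n} (hp : 1 ≤ ‖p.2‖) :
    (∀ v w, M.g p v w = mink v w) ∧ O.Z p = ((1 : ℝ), (0 : Evec n)) := by
  rcases lt_or_eq_of_le hp with h | h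
  · exact h11 p h
  · -- boundary case ‖p.2‖ = 1, by continuity
    set q : ℕ → Vec n := fun k => (p.1, (1 + 1 / (k + 1 : ℝ)) • p.2) with hqdef
    have hpos : ∀ k : ℕ, (0 : ℝ) < 1 / (k + 1 : ℝ) := by
      intro k; positivity
    have hqnorm : ∀ k, 1 < ‖(q k).2‖ := by
      intro k
      have : ‖(q k).2‖ = (1 + 1 / (k + 1 : ℝ)) * ‖p.2‖ := by
        rw [hqdef]; simp only [norm_smul, Real.norm_eq_abs]
        rw [abs_of_pos (by have := hpos k; linarith)]
      rw [this, ← h]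
      have := hpos k; linarith
    have hc1 : Tendsto (fun k : ℕ => (1 + 1 / (k + 1 : ℝ))) atTop (𝓝 1) := by
      have := tendsto_one_div_add_atTop_nhds_zero_nat (𝕜 := ℝ)
      simpa using tendsto_const_nhds.add this
    have hqt : Tendsto q atTop (𝓝 p) := by
      have h2 : Tendsto (fun k : ℕ => (1 + 1 / (k + 1 : ℝ)) • p.2) atTop (𝓝 p.2) := by
        simpa using hc1.smul_const p.2
      have h3 := (tendsto_const_nhds (x := p.1) (f := atTop (α := ℕ))).prodMk_nhds h2
      rw [hqdef]; convert h3 using 2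
    constructor
    · intro v w
      have hc : Continuous fun x : Vec n => M.g x v w := by
        exact (ContinuousLinearMap.apply ℝ ℝ w).continuous.comp
          (((ContinuousLinearMap.apply ℝ (Vec n →L[ℝ] ℝ) v).continuous).comp
            M.smooth.continuous)
      have h1 : Tendsto (fun k => M.g (q k) v w) atTop (𝓝 (M.g p v w)) :=
        (hc.tendsto p).comp hqt
      have h2 : (fun k => M.g (q k) v w) = fun _ => mink v w := by
        funext k; exact (h11 (q k) (hqnorm k)).1 v w
      rw [h2] at h1
      exact tendsto_nhds_unique h1 tendsto_const_nhds
    · have hc : Continuous O.Z := O.smooth.continuous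
      have h1 : Tendsto (fun k => O.Z (q k)) atTop (𝓝 (O.Z p)) := (hc.tendsto p).comp hqt
      have h2 : (fun k => O.Z (q k)) = fun _ => ((1 : ℝ), (0 : Evec n)) := by
        funext k; exact (h11 (q k) (hqnorm k)).2
      rw [h2] at h1
      exact (tendsto_nhds_unique h1 tendsto_const_nhds)

end Aux
section Aux2

variable {n : ℕ}

lemma L26_continuousOn_union_closed {α β : Type*} [TopologicalSpace α] [TopologicalSpace β]
    {f : α → β} {s t : Set α} (hs : IsClosed s) (ht : IsClosed t)
    (h1 : ContinuousOn f s) (h2 : ContinuousOn f t) : ContinuousOn f (s ∪ t) := by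
  intro x hx
  have c1 : ContinuousWithinAt f s x := by
    by_cases h : x ∈ s
    · exact h1 x h
    · exact continuousWithinAt_of_notMem_closure (by rwa [hs.closure_eq])
  have c2 : ContinuousWithinAt f t x := by
    by_cases h : x ∈ t
    · exact h2 x h
    · exact continuousWithinAt_of_notMem_closure (by rwa [ht.closure_eq])
  exact c1.union c2

lemma L26_piecewise_continuousOn {Dir : Vec n → Vec n → Prop} {γ : ℝ → Vec n} {c d : ℝ}
    (h : PiecewiseDirOn Dir γ c d) : ContinuousOn γ (Icc c d) := by
  obtain ⟨hcd, k, s, hs0, hsl, hmono, hpieces⟩ := h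
  have main : ∀ j : Fin (k + 1), ContinuousOn γ (Icc (s 0) (s j)) := by
    intro j
    induction j using Fin.induction with
    | zero => rw [Icc_self]; exact continuousOn_singleton γ (s 0)
    | succ i ih =>
      have h1 : ContinuousOn γ (Icc (s i.castSucc) (s i.succ)) := (hpieces i).1.continuousOn
      have hle1 : s 0 ≤ s i.castSucc := hmono.monotone (Fin.zero_le _)
      have hle2 : s i.castSucc ≤ s i.succ := (hmono (Fin.castSucc_lt_succ (i := i))).le
      rw [← Icc_union_Icc_eq_Icc hle1 hle2]
      exact L26_continuousOn_union_closed isClosed_Icc isClosed_Icc ih h1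
  have := main (Fin.last k)
  rwa [hs0, hsl] at this

/-- The key gluing lemma: a function whose differential is positive on the tangent
vectors of a piecewise curve increases along the curve. -/
lemma L26_glue {Dir : Vec n → Vec n → Prop} {γ : ℝ → Vec n} {c d : ℝ}
    (h : PiecewiseDirOn Dir γ c d) (φ : Vec n → ℝ) (L : Vec n → (Vec n →L[ℝ] ℝ))
    (hφ : ∀ q, HasFDerivAt φ (L q) q)
    (hpos : ∀ r ∈ Icc c d, ∀ v, Dir (γ r) v → 0 < L (γ r) v) :
    φ (γ c) < φ (γ d) := by
  obtain ⟨hcd, k, s, hs0, hsl, hmono, hpieces⟩ := h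
  have hφc : Continuous φ := continuous_iff_continuousAt.2 fun q => (hφ q).continuousAt
  rcases Nat.eq_zero_or_pos k with hk | hk
  · exfalso
    subst hk
    have hl0 : (Fin.last 0) = (0 : Fin (0+1)) := rfl
    rw [hl0, hs0] at hsl
    linarith
  have piece : ∀ i : Fin k, φ (γ (s i.castSucc)) < φ (γ (s i.succ)):= by
    intro i
    obtain ⟨hsm, hdir⟩ := hpieces i
    have hlt : s i.castSucc < s i.succ := hmono (Fin.castSucc_lt_succ (i := i))
    have hsubset : Icc (s i.castSucc) (s i.succ) ⊆ Icc c d := by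
      apply Icc_subset_Icc
      · rw [← hs0]; exact hmono.monotone (Fin.zero_le _)
      · rw [← hsl]; exact hmono.monotone (Fin.le_last _)
    have hmono' : StrictMonoOn (fun r => φ (γ r)) (Icc (s i.castSucc) (s i.succ)) := by
      apply strictMonoOn_of_deriv_pos (convex_Icc _ _)
      · exact hφc.comp_continuousOn hsm.continuousOn
      · intro x hx
        rw [interior_Icc] at hx
        have hxI : x ∈ Icc (s i.castSucc) (s i.succ) := Ioo_subset_Icc_self hx
        have hnhds : Icc (s i.castSucc) (s i.succ) ∈ 𝓝 x := Icc_mem_nhds hx.1 hx.2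
        have hdiffW : DifferentiableWithinAt ℝ γ (Icc (s i.castSucc) (s i.succ)) x :=
          hsm.differentiableOn (by simp) x hxI
        have hdiff : DifferentiableAt ℝ γ x := hdiffW.differentiableAt hnhds
        have hder : HasDerivAt (fun r => φ (γ r)) (L (γ x) (deriv γ x)) x :=
          (hφ (γ x)).comp_hasDerivAt x hdiff.hasDerivAt
        rw [hder.deriv]
        have hwd : derivWithin γ (Icc (s i.castSucc) (s i.succ)) x = deriv γ x :=
          derivWithin_of_mem_nhds hnhds
        have := hpos x (hsubset hxI) _ (hdir x hxI)
        rwa [hwd] at this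
    exact hmono' (left_mem_Icc.2 hlt.le) (right_mem_Icc.2 hlt.le) hlt
  have hchain : StrictMono (fun i : Fin (k + 1) => φ (γ (s i))) :=
    Fin.strictMono_iff_lt_succ.2 piece
  have h0l : (0 : Fin (k + 1)) < Fin.last k := by
    rw [Fin.lt_def]
    simpa using hk
  have := hchain h0l
  simp only at this
  rwa [hs0, hsl] at this

end Aux2
section Aux3

variable {n : ℕ}

lemma L26_exists_real_gt {a : EReal} {s : ℝ} (h : a < (s : EReal)) :
    ∃ c : ℝ, a < (c : EReal) ∧ c < s := by
  induction a using EReal.rec with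
  | bot => exact ⟨s - 1, EReal.bot_lt_coe _, by linarith⟩
  | coe a =>
    have ha : a < s := by exact_mod_cast h
    exact ⟨(a + s) / 2, by exact_mod_cast (by linarith : a < (a + s) / 2), by linarith⟩
  | top => exact absurd h (by simp)

lemma L26_exists_real_lt {b : EReal} {s : ℝ} (h : (s : EReal) < b) :
    ∃ d : ℝ, (d : EReal) < b ∧ s < d := by
  induction b using EReal.rec with
  | bot => exact absurd h (by simp)
  | coe b =>
    have hb : s < b := by exact_mod_cast h
    exact ⟨(s + b) / 2, by exact_mod_cast (by linarith : (s + b) / 2 < b), by linarith⟩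
  | top => exact ⟨s + 1, EReal.coe_lt_top _, by linarith⟩

lemma L26_erealIoo_Icc {a b : EReal} {x y : ℝ} (hx : x ∈ erealIoo a b)
    (hy : y ∈ erealIoo a b) : Icc x y ⊆ erealIoo a b := by
  intro z hz
  constructor
  · exact lt_of_lt_of_le hx.1 (by exact_mod_cast hz.1)
  · exact lt_of_le_of_lt (by exact_mod_cast hz.2) hy.2

lemma L26_erealIoo_uIcc {a b : EReal} {x y : ℝ} (hx : x ∈ erealIoo a b)
    (hy : y ∈ erealIoo a b) : uIcc x y ⊆ erealIoo a b := by
  rcases min_choice x y with h | h <;> rcases max_choice x y with h' | h' <;>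
    · rw [uIcc]
      apply L26_erealIoo_Icc <;> simp only [h, h'] <;> assumption

/-- A continuous injective function on an order-connected set of reals is strictly
monotone or strictly antitone. -/
lemma L26_strictMonoOn_or_anti {f : ℝ → ℝ} {I : Set ℝ}
    (hIcc : ∀ x ∈ I, ∀ y ∈ I, Icc x y ⊆ I)
    (hc : ContinuousOn f I) (hi : InjOn f I) :
    StrictMonoOn f I ∨ StrictAntiOn f I := by
  by_cases hex : ∃ u ∈ I, ∃ v ∈ I, u < v
  · obtain ⟨u, hu, v, hv, huv⟩ := hex
    have key : ∀ x ∈ I, ∀ y ∈ I, x < y →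
        ((f u < f v → f x < f y) ∧ (f v < f u → f y < f x)) := by
      intro x hx y hy hxy
      set c := min u x with hc'
      set d := max v y with hd'
      have hcI : c ∈ I := by rcases min_choice u x with h | h <;> rw [hc', h] <;> assumption
      have hdI : d ∈ I := by rcases max_choice v y with h | h <;> rw [hd', h] <;> assumption
      have hcd : c ≤ d := le_trans (min_le_left u x) (le_trans huv.le (le_max_left v y))
      have hsub : Icc c d ⊆ I := hIcc c hcI d hdI
      have huIcc : u ∈ Icc c d := ⟨min_le_left u x, le_trans huv.le (le_max_left v y)⟩
      have hvIcc : v ∈ Icc c d := ⟨le_trans (min_le_left u x) huv.le, le_max_left v y⟩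
      have hxIcc : x ∈ Icc c d := ⟨min_le_right u x, le_trans hxy.le (le_max_right v y)⟩
      have hyIcc : y ∈ Icc c d := ⟨le_trans (min_le_right u x) hxy.le, le_max_right v y⟩
      rcases ContinuousOn.strictMonoOn_of_injOn_Icc' hcd (hc.mono hsub) (hi.mono hsub)
        with hm | ha
      · exact ⟨fun _ => hm hxIcc hyIcc hxy, fun h' => absurd (hm huIcc hvIcc huv) (by linarith)⟩
      · exact ⟨fun h' => absurd (ha huIcc hvIcc huv) (by linarith), fun _ => ha hxIcc hyIcc hxy⟩
    rcases lt_trichotomy (f u) (f v) with h | h | h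
    · exact Or.inl fun x hx y hy hxy => (key x hx y hy hxy).1 h
    · exact absurd (hi hu hv h) huv.ne
    · exact Or.inr fun x hx y hy hxy => (key x hx y hy hxy).2 h
  · push_neg at hex
    exact Or.inl fun x hx y hy hxy => absurd hxy (not_lt.2 (hex x hx y hy))

end Aux3
section Aux4

variable {n : ℕ} {M : LorentzMetric n} {O : TimeOrientation M}

/-- τ is strictly increasing along vertical lines in the exterior region. -/
lemma L26_tau_vline_strictMono (h11 : Cond11 M O) (T : CauchyTemporal M O)
    {x : Evec n} (hx : 1 ≤ ‖x‖) : StrictMono (fun t : ℝ => T.τ (t, x)) := by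
  apply strictMono_of_deriv_pos
  intro t
  have hcurve : HasDerivAt (fun t : ℝ => ((t, x) : Vec n)) ((1 : ℝ), (0 : Evec n)) t :=
    HasDerivAt.prodMk (hasDerivAt_id t) (hasDerivAt_const t x)
  have hτ : HasFDerivAt T.τ (fderiv ℝ T.τ (t, x)) (t, x) :=
    ((T.smooth.differentiable (by simp)) (t, x)).hasFDerivAt
  have hcomp := hτ.comp_hasDerivAt t hcurve
  rw [show (fun t : ℝ => T.τ (t, x)) = (T.τ ∘ fun t => (t, x)) from rfl, hcomp.deriv]
  have hgrad := T.grad_spec (t, x) ((1 : ℝ), (0 : Evec n))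
  rw [← hgrad]
  have hZ := (L26_cond11_ext h11 (p := (t, x)) (by simpa using hx)).2
  rw [← hZ]
  exact (T.grad_past (t, x)).2

/-- Vertical lines in the open exterior region are inextendible timelike curves. -/
lemma L26_vline_inext (h11 : Cond11 M O) {x : Evec n} (hx : 1 < ‖x‖) :
    InextTimelike M O (fun t : ℝ => ((t, x) : Vec n)) ⊥ ⊤ := by
  have hfact : ∀ p : Vec n, 1 < ‖p.2‖ →
      (M.Timelike p ((1 : ℝ), (0 : Evec n)) ∧
        M.g p ((1 : ℝ), (0 : Evec n)) (O.Z p) < 0) := by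
    intro p hp
    obtain ⟨hg, hZ⟩ := h11 p hp
    constructor
    · show M.g p _ _ < 0
      rw [hg, L26_mink_dt]; norm_num
    · rw [hZ, hg, L26_mink_dt]; norm_num
  refine ⟨⟨bot_lt_top, Or.inl ?_⟩, ?_, ?_⟩
  · intro c d _ _ hcd
    refine ⟨hcd, 1, ![c, d], rfl, rfl, ?_, ?_⟩
    · intro i j hij
      fin_cases i <;> fin_cases j <;> simp_all
    · intro i
      have hi : i = 0 := Subsingleton.elim _ _
      subst hi
      have h0 : (![c, d] : Fin 2 → ℝ) (Fin.castSucc 0) = c := rfl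
      have h1 : (![c, d] : Fin 2 → ℝ) (Fin.succ 0) = d := rfl
      rw [h0, h1]
      constructor
      · exact (contDiff_id.prodMk contDiff_const).contDiffOn
      · intro r hr
        have hder : HasDerivWithinAt (fun t : ℝ => ((t, x) : Vec n))
            ((1 : ℝ), (0 : Evec n)) (Icc c d) r :=
          (HasDerivAt.prodMk (hasDerivAt_id r) (hasDerivAt_const r x)).hasDerivWithinAt
        rw [hder.derivWithin (uniqueDiffOn_Icc hcd r hr)]
        exact hfact (r, x) (by simpa using hx)
  · rintro ⟨L, hL⟩
    have hmem : ∀ c : ℝ, Iio c ∈ rightLimFilter (⊥ : EReal) := by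
      intro c
      have h1 : Iio ((c : ℝ) : EReal) ∈ 𝓝[>] (⊥ : EReal) :=
        mem_nhdsWithin_of_mem_nhds (EReal.mem_nhds_bot_iff.2 ⟨c, subset_rfl⟩)
      have := Filter.preimage_mem_comap (m := fun r : ℝ => (r : EReal)) h1
      unfold rightLimFilter
      convert this using 1
      ext r; simp [EReal.coe_lt_coe_iff]
    have hne : (rightLimFilter (⊥ : EReal)).NeBot := by
      apply Filter.comap_neBot
      intro t ht
      rw [mem_nhdsWithin] at ht
      obtain ⟨U, hUo, hUb, hUsub⟩ := ht
      obtain ⟨y, hy⟩ := EReal.mem_nhds_bot_iff.1 (hUo.mem_nhds hUb)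
      refine ⟨y - 1, hUsub ⟨hy ?_, EReal.bot_lt_coe _⟩⟩
      rw [mem_Iio]
      exact_mod_cast (by linarith : (y - 1 : ℝ) < y)
    have h1 : Tendsto (fun t : ℝ => t) (rightLimFilter ⊥) (𝓝 L.1) := by
      have := (continuous_fst.tendsto L).comp hL
      exact this
    have h2 : Tendsto (fun t : ℝ => t) (rightLimFilter (⊥ : EReal)) atBot := by
      rw [tendsto_atBot]
      intro c
      exact Filter.mem_of_superset (hmem c) (fun r (hr : r < c) => (le_of_lt hr : r ≤ c))
    exact not_tendsto_atBot_of_tendsto_nhds h1 h2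
  · rintro ⟨L, hL⟩
    have hmem : ∀ c : ℝ, Ioi c ∈ leftLimFilter (⊤ : EReal) := by
      intro c
      have h1 : Ioi ((c : ℝ) : EReal) ∈ 𝓝[<] (⊤ : EReal) :=
        mem_nhdsWithin_of_mem_nhds (EReal.mem_nhds_top_iff.2 ⟨c, subset_rfl⟩)
      have := Filter.preimage_mem_comap (m := fun r : ℝ => (r : EReal)) h1
      unfold leftLimFilter
      convert this using 1
      ext r; simp [EReal.coe_lt_coe_iff]
    have hne : (leftLimFilter (⊤ : EReal)).NeBot := by
      apply Filter.comap_neBot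
      intro t ht
      rw [mem_nhdsWithin] at ht
      obtain ⟨U, hUo, hUb, hUsub⟩ := ht
      obtain ⟨y, hy⟩ := EReal.mem_nhds_top_iff.1 (hUo.mem_nhds hUb)
      refine ⟨y + 1, hUsub ⟨hy ?_, EReal.coe_lt_top _⟩⟩
      rw [mem_Ioi]
      exact_mod_cast (by linarith : y < (y + 1 : ℝ))
    have h1 : Tendsto (fun t : ℝ => t) (leftLimFilter ⊤) (𝓝 L.1) := by
      have := (continuous_fst.tendsto L).comp hL
      exact this
    have h2 : Tendsto (fun t : ℝ => t) (leftLimFilter (⊤ : EReal)) atTop := by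
      rw [tendsto_atTop]
      intro c
      exact Filter.mem_of_superset (hmem c) (fun r (hr : c < r) => (le_of_lt hr : c ≤ r))
    exact not_tendsto_atTop_of_tendsto_nhds h1 h2

end Aux4
section Aux5

variable {n : ℕ} {M : LorentzMetric n} {O : TimeOrientation M}

/-- The linear functional p ↦ e p₁ + ⟨p₂, ξ⟩ as a continuous linear map. -/
def L26lin (n : ℕ) (e : ℝ) (ξ : Evec n) : Vec n →L[ℝ] ℝ :=
  e • ContinuousLinearMap.fst ℝ ℝ (Evec n) +
    (innerSL ℝ ξ).comp (ContinuousLinearMap.snd ℝ ℝ (Evec n))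

lemma L26lin_apply (e : ℝ) (ξ : Evec n) (v : Vec n) :
    L26lin n e ξ v = e * v.1 + ⟪v.2, ξ⟫ := by
  simp only [L26lin, ContinuousLinearMap.add_apply, ContinuousLinearMap.smul_apply,
    ContinuousLinearMap.coe_fst', ContinuousLinearMap.comp_apply,
    ContinuousLinearMap.coe_snd', innerSL_apply_apply, smul_eq_mul]
  rw [real_inner_comm]

lemma L26lin_hasFDerivAt (e : ℝ) (ξ : Evec n) (q : Vec n) :
    HasFDerivAt (fun p : Vec n => e * p.1 + ⟪p.2, ξ⟫) (L26lin n e ξ) q := by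
  have h : (fun p : Vec n => e * p.1 + ⟪p.2, ξ⟫) = ⇑(L26lin n e ξ) := by
    funext p; rw [L26lin_apply]
  rw [h]
  exact (L26lin n e ξ).hasFDerivAt

/-- At exterior points, tangent vectors of an ε-directed timelike curve satisfy the
Minkowski cone conditions. -/
lemma L26_far_dir (h11 : Cond11 M O) {p v : Vec n} (hfar : 1 < ‖p.2‖) {ε : ℝ}
    (h1 : M.Timelike p v) (h2 : ε * M.g p v (O.Z p) < 0) :
    mink v v < 0 ∧ 0 < ε * v.1 := by
  obtain ⟨hg, hZ⟩ := h11 p hfar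
  have hm : mink v v < 0 := by rw [← hg]; exact h1
  refine ⟨hm, ?_⟩
  rw [hZ, hg, L26_mink_dt] at h2
  nlinarith

/-- Positivity of the differential of the linear functionals on the Minkowski cone. -/
lemma L26_lin_pos {v : Vec n} {ε : ℝ} {ξ : Evec n} (hξ : ‖ξ‖ ≤ 1)
    (hm : mink v v < 0) (hs : 0 < ε * v.1) (hε : ε = 1 ∨ ε = -1) :
    0 < L26lin n ε ξ v := by
  rw [L26lin_apply]
  have hb := L26_timelike_bound hm
  have hi : |⟪v.2, ξ⟫| ≤ ‖v.2‖ * ‖ξ‖ := abs_real_inner_le_norm _ _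
  have hi2 : |⟪v.2, ξ⟫| ≤ ‖v.2‖ := le_trans hi (by nlinarith [norm_nonneg v.2])
  rcases hε with h | h <;> subst h
  · rw [abs_of_pos (by linarith)] at hb
    have := abs_le.1 hi2
    nlinarith
  · rw [abs_of_neg (by nlinarith : v.1 < 0)] at hb
    have := abs_le.1 hi2
    nlinarith

/-- At exterior points the differential of τ is positive on future cones (ε = 1),
negative on past cones (ε = -1). -/
lemma L26_far_fderiv_tau (h11 : Cond11 M O) (T : CauchyTemporal M O) {p : Vec n}
    (hfar : 1 < ‖p.2‖) {ε : ℝ} (hε : ε = 1 ∨ ε = -1) {v : Vec n}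
    (hm : mink v v < 0) (hs : 0 < ε * v.1) :
    0 < ε * fderiv ℝ T.τ p v := by
  obtain ⟨hg, hZ⟩ := h11 p hfar
  have hspec := T.grad_spec p v
  rw [← hspec, hg]
  have hgt : mink (T.grad p) (T.grad p) < 0 := by rw [← hg]; exact T.grad_timelike p
  have hgp : (T.grad p).1 < 0 := by
    have := (T.grad_past p).2
    rw [hZ, hg, L26_mink_dt] at this
    linarith
  rcases hε with h | h <;> subst h
  · have hv1 : 0 < v.1 := by linarith [hs]
    have := L26_mink_pos_of_opp hgt hm (by nlinarith : (T.grad p).1 * v.1 < 0)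
    linarith
  · have hv1 : v.1 < 0 := by nlinarith
    have := L26_mink_neg_of_same hgt hm (by nlinarith : 0 < (T.grad p).1 * v.1)
    nlinarith

/-- The connectedness argument: a level set of τ containing a point above the slice inside
the cylinder and a point below the slice, but avoiding the annulus above the slice,
must meet the slice inside the closed ball. -/
lemma L26_sigma_above (T : CauchyTemporal M O) {t₀ r : ℝ} {P w : Vec n}
    (hPmem : T.τ P = r) (hPt : t₀ < P.1) (hPx : ‖P.2‖ < 1)
    (hwmem : T.τ w = r) (hwt : w.1 < t₀)
    (hann : ∀ p : Vec n, t₀ ≤ p.1 → 1 ≤ ‖p.2‖ → ‖p.2‖ ≤ 3 → T.τ p ≠ r) :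
    ∃ q : Vec n, q.1 = t₀ ∧ ‖q.2‖ ≤ 1 ∧ T.τ q = r := by
  by_contra hno
  push_neg at hno
  have hconn := (T.level_conn r).isPreconnected
  set U : Set (Vec n) := {p | t₀ < p.1 ∧ ‖p.2‖ < 1} with hUdef
  set V : Set (Vec n) := {p | p.1 < t₀ ∨ 1 < ‖p.2‖} with hVdef
  have hUo : IsOpen U := (isOpen_lt continuous_const continuous_fst).inter
    (isOpen_lt (continuous_norm.comp continuous_snd) continuous_const)
  have hVo : IsOpen V := (isOpen_lt continuous_fst continuous_const).union
    (isOpen_lt continuous_const (continuous_norm.comp continuous_snd))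
  have hcover : T.τ ⁻¹' {r} ⊆ U ∪ V := by
    intro p hp
    have hpr : T.τ p = r := hp
    rcases lt_trichotomy p.1 t₀ with h | h | h
    · exact Or.inr (Or.inl h)
    · rcases le_or_gt ‖p.2‖ 1 with h' | h'
      · exact absurd hpr (hno p h h')
      · exact Or.inr (Or.inr h')
    · rcases lt_or_ge ‖p.2‖ 1 with h' | h'
      · exact Or.inl ⟨h, h'⟩
      · rcases le_or_gt ‖p.2‖ 3 with h'' | h''
        · exact absurd hpr (hann p h.le h' h'')
        · exact Or.inr (Or.inr (by linarith))
  have hUne : (T.τ ⁻¹' {r} ∩ U).Nonempty := ⟨P, hPmem, hPt, hPx⟩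
  have hVne : (T.τ ⁻¹' {r} ∩ V).Nonempty := ⟨w, hwmem, Or.inl hwt⟩
  obtain ⟨q, _, hqU, hqV⟩ := hconn U V hUo hVo hcover hUne hVne
  rcases hqV with h | h
  · linarith [hqU.1]
  · linarith [hqU.2]

/-- Mirror image of `L26_sigma_above`. -/
lemma L26_sigma_below (T : CauchyTemporal M O) {t₀ r : ℝ} {P w : Vec n}
    (hPmem : T.τ P = r) (hPt : P.1 < t₀) (hPx : ‖P.2‖ < 1)
    (hwmem : T.τ w = r) (hwt : t₀ < w.1)
    (hann : ∀ p : Vec n, p.1 ≤ t₀ → 1 ≤ ‖p.2‖ → ‖p.2‖ ≤ 3 → T.τ p ≠ r) :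
    ∃ q : Vec n, q.1 = t₀ ∧ ‖q.2‖ ≤ 1 ∧ T.τ q = r := by
  by_contra hno
  push_neg at hno
  have hconn := (T.level_conn r).isPreconnected
  set U : Set (Vec n) := {p | p.1 < t₀ ∧ ‖p.2‖ < 1} with hUdef
  set V : Set (Vec n) := {p | t₀ < p.1 ∨ 1 < ‖p.2‖} with hVdef
  have hUo : IsOpen U := (isOpen_lt continuous_fst continuous_const).inter
    (isOpen_lt (continuous_norm.comp continuous_snd) continuous_const)
  have hVo : IsOpen V := (isOpen_lt continuous_const continuous_fst).union
    (isOpen_lt continuous_const (continuous_norm.comp continuous_snd))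
  have hcover : T.τ ⁻¹' {r} ⊆ U ∪ V := by
    intro p hp
    have hpr : T.τ p = r := hp
    rcases lt_trichotomy p.1 t₀ with h | h | h
    · rcases lt_or_ge ‖p.2‖ 1 with h' | h'
      · exact Or.inl ⟨h, h'⟩
      · rcases le_or_gt ‖p.2‖ 3 with h'' | h''
        · exact absurd hpr (hann p h.le h' h'')
        · exact Or.inr (Or.inr (by linarith))
    · rcases le_or_gt ‖p.2‖ 1 with h' | h'
      · exact absurd hpr (hno p h h')
      · exact Or.inr (Or.inr h')
    · exact Or.inr (Or.inl h)
  have hUne : (T.τ ⁻¹' {r} ∩ U).Nonempty := ⟨P, hPmem, hPt, hPx⟩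
  have hVne : (T.τ ⁻¹' {r} ∩ V).Nonempty := ⟨w, hwmem, Or.inl hwt⟩
  obtain ⟨q, _, hqU, hqV⟩ := hconn U V hUo hVo hcover hUne hVne
  rcases hqV with h | h
  · linarith [hqU.1]
  · linarith [hqU.2]

end Aux5
section Aux6

variable {n : ℕ} {M : LorentzMetric n} {O : TimeOrientation M}

lemma L26_compact_of (S : Set (Vec n)) (hcl : IsClosed S) (R : ℝ)
    (hb : ∀ p ∈ S, ‖p‖ ≤ R) : IsCompact S := by
  apply Metric.isCompact_of_isClosed_isBounded hcl
  exact (Metric.isBounded_closedBall (x := (0 : Vec n)) (r := R)).subset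
    (fun p hp => mem_closedBall_zero_iff.2 (hb p hp))

lemma L26_tau_minmax_on (T : CauchyTemporal M O) {S : Set (Vec n)} (hS : IsCompact S)
    (hne : S.Nonempty) : ∃ C D : ℝ, ∀ p ∈ S, C ≤ T.τ p ∧ T.τ p ≤ D := by
  obtain ⟨q, hq, hqmin⟩ := hS.exists_isMinOn hne (T.smooth.continuous.continuousOn)
  obtain ⟨q', hq', hqmax⟩ := hS.exists_isMaxOn hne (T.smooth.continuous.continuousOn)
  exact ⟨T.τ q, T.τ q', fun p hp => ⟨hqmin hp, hqmax hp⟩⟩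

/-- If a curve is trapped in a box along a set of parameters on which τ is unbounded,
we get a contradiction. -/
lemma L26_box_trap (T : CauchyTemporal M O) (γ : ℝ → Vec n) (S : Set ℝ)
    (A B : ℝ) (x₀ : Evec n)
    (hb : ∀ s ∈ S, |(γ s).1| ≤ A ∧ ‖(γ s).2 - x₀‖ ≤ B)
    (hub : ∀ m : ℝ, ∃ s ∈ S, ¬|T.τ (γ s)| ≤ m) : False := by
  set K : Set (Vec n) := {p | |p.1| ≤ A ∧ ‖p.2 - x₀‖ ≤ B} with hKdef
  have hKcl : IsClosed K := by
    apply IsClosed.inter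
    · exact isClosed_le (continuous_abs.comp continuous_fst) continuous_const
    · exact isClosed_le ((continuous_snd.sub continuous_const).norm) continuous_const
  have hKb : ∀ p ∈ K, ‖p‖ ≤ |A| + (‖x₀‖ + |B|) := by
    intro p hp
    rw [Prod.norm_def]
    apply max_le
    · rw [Real.norm_eq_abs]
      calc |p.1| ≤ A := hp.1
        _ ≤ |A| + (‖x₀‖ + |B|) := by
          have := le_abs_self A; have := norm_nonneg x₀; have := abs_nonneg B; linarith
    · have h1 : ‖p.2‖ ≤ ‖p.2 - x₀‖ + ‖x₀‖ := by
        have := norm_add_le (p.2 - x₀) x₀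
        rwa [sub_add_cancel] at this
      have := hp.2; have := le_abs_self A; have := abs_nonneg A
      have := le_abs_self B; linarith
  have hK : IsCompact K := L26_compact_of K hKcl _ hKb
  obtain ⟨s₀, hs₀, _⟩ := hub 0
  have hne : K.Nonempty := ⟨γ s₀, (hb s₀ hs₀).1, (hb s₀ hs₀).2⟩
  obtain ⟨C, D, hCD⟩ := L26_tau_minmax_on T hK hne
  obtain ⟨s, hsS, hs⟩ := hub (max |C| |D|)
  have hmem : γ s ∈ K := ⟨(hb s hsS).1, (hb s hsS).2⟩
  obtain ⟨h1, h2⟩ := hCD _ hmem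
  apply hs
  rw [abs_le]
  constructor
  · calc -(max |C| |D|) ≤ -|C| := by simp [le_max_left]
      _ ≤ C := neg_abs_le C
      _ ≤ T.τ (γ s) := h1
  · calc T.τ (γ s) ≤ D := h2
      _ ≤ |D| := le_abs_self D
      _ ≤ max |C| |D| := le_max_right _ _
  
end Aux6
section Master

variable {n : ℕ} {M : LorentzMetric n} {O : TimeOrientation M}

lemma L26_unit_inner {n : ℕ} {w : Evec n} (hw : w ≠ 0) :
    ⟪w, ‖w‖⁻¹ • w⟫ = ‖w‖ ∧ ‖‖w‖⁻¹ • w‖ = 1 := by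
  constructor
  · rw [real_inner_smul_right, real_inner_self_eq_norm_sq, pow_two,
      inv_mul_cancel_left₀ (norm_ne_zero_iff.2 hw)]
  · rw [norm_smul, norm_inv, norm_norm, inv_mul_cancel₀ (norm_ne_zero_iff.2 hw)]

set_option maxHeartbeats 1000000 in
lemma L26_master (h11 : Cond11 M O) (T : CauchyTemporal M O) (hn : 0 < n)
    (t₀ : ℝ) (γ : ℝ → Vec n) (a b : EReal) (hγ : InextTimelike M O γ a b)
    {Dir : Vec n → Vec n → Prop} {ε : ℝ} (hε : ε = 1 ∨ ε = -1)
    (hD : ∀ c d : ℝ, a < (c : EReal) → (d : EReal) < b → c < d → PiecewiseDirOn Dir γ c d)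
    (hd : ∀ p v, Dir p v → M.Timelike p v ∧ ε * M.g p v (O.Z p) < 0)
    (hcon : ∀ r ∈ erealIoo a b, (γ r).1 ≠ t₀) : False := by
  have hIcc : ∀ x ∈ erealIoo a b, ∀ y ∈ erealIoo a b, Icc x y ⊆ erealIoo a b :=
    fun x hx y hy => L26_erealIoo_Icc hx hy
  have huIcc : ∀ x ∈ erealIoo a b, ∀ y ∈ erealIoo a b, uIcc x y ⊆ erealIoo a b :=
    fun x hx y hy => L26_erealIoo_uIcc hx hy
  have hPD : ∀ x ∈ erealIoo a b, ∀ y ∈ erealIoo a b, x < y → PiecewiseDirOn Dir γ x y :=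
    fun x hx y hy hxy => hD x y hx.1 hy.2 hxy
  -- continuity
  have hgc : ContinuousOn γ (erealIoo a b) := by
    intro s hs
    obtain ⟨c, hc, hcs⟩ := L26_exists_real_gt hs.1
    obtain ⟨d, hd', hsd⟩ := L26_exists_real_lt hs.2
    have hpc := L26_piecewise_continuousOn (hD c d hc hd' (lt_trans hcs hsd))
    exact (hpc.continuousAt (Icc_mem_nhds hcs hsd)).continuousWithinAt
  have hfc : ContinuousOn (fun s => T.τ (γ s)) (erealIoo a b) :=
    T.smooth.continuous.comp_continuousOn hgc
  -- injectivity and surjectivity of τ ∘ γ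
  have hInj : InjOn (fun s => T.τ (γ s)) (erealIoo a b) := by
    intro s hs s' hs' heq
    exact (T.level_cauchy (T.τ (γ s)) γ a b hγ).unique ⟨hs, rfl⟩
      ⟨hs', by rw [mem_preimage, mem_singleton_iff]; exact heq.symm⟩
  have hSurj : ∀ v : ℝ, ∃ s, s ∈ erealIoo a b ∧ T.τ (γ s) = v := by
    intro v
    obtain ⟨s, ⟨hsI, hsv⟩, _⟩ := T.level_cauchy v γ a b hγ
    exact ⟨s, hsI, hsv⟩
  have hMono := L26_strictMonoOn_or_anti hIcc hfc hInj
  -- the curve stays entirely on one side of the slice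
  have hsgn : (∀ s ∈ erealIoo a b, t₀ < (γ s).1) ∨ (∀ s ∈ erealIoo a b, (γ s).1 < t₀) := by
    obtain ⟨s₀, hs₀, _⟩ := hSurj 0
    have key : ∀ s ∈ erealIoo a b, ∀ s' ∈ erealIoo a b,
        t₀ < (γ s).1 → (γ s').1 < t₀ → False := by
      intro s hs s' hs' h1 h2
      have hsub := huIcc s' hs' s hs
      have hcont' : ContinuousOn (fun u => (γ u).1) (uIcc s' s) :=
        continuous_fst.comp_continuousOn (hgc.mono hsub)
      have hmem : t₀ ∈ uIcc ((γ s').1) ((γ s).1) := by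
        rw [mem_uIcc]; left; exact ⟨h2.le, h1.le⟩
      obtain ⟨u, hu, hu'⟩ := intermediate_value_uIcc hcont' hmem
      exact hcon u (hsub hu) hu'
    rcases lt_or_gt_of_ne (hcon s₀ hs₀) with h | h
    · right; intro s hs
      by_contra h'
      push_neg at h'
      rcases eq_or_lt_of_le h' with h'' | h''
      · exact hcon s hs h''.symm
      · exact key s hs s₀ hs₀ h'' h
    · left; intro s hs
      by_contra h'
      push_neg at h'
      rcases eq_or_lt_of_le h' with h'' | h''
      · exact hcon s hs h''
      · exact key s₀ hs₀ s hs h h''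
  -- compact slices and their τ-bounds
  set x₂ : Evec n := EuclideanSpace.single (⟨0, hn⟩ : Fin n) (2 : ℝ) with hx₂def
  have hx₂ : ‖x₂‖ = 2 := by
    rw [hx₂def, EuclideanSpace.norm_single]; norm_num
  set K₀ : Set (Vec n) := {p | p.1 = t₀ ∧ 1 ≤ ‖p.2‖ ∧ ‖p.2‖ ≤ 3} with hK₀def
  have hK₀c : IsCompact K₀ := by
    apply L26_compact_of _ ?_ (|t₀| + 3)
    · intro p hp
      rw [Prod.norm_def]
      apply max_le
      · rw [Real.norm_eq_abs, hp.1]; linarith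
      · have := abs_nonneg t₀; linarith [hp.2.2]
    · exact (isClosed_eq continuous_fst continuous_const).inter
        ((isClosed_le continuous_const (continuous_norm.comp continuous_snd)).inter
          (isClosed_le (continuous_norm.comp continuous_snd) continuous_const))
  have hK₀ne : K₀.Nonempty := ⟨(t₀, x₂), rfl, by rw [hx₂]; norm_num, by rw [hx₂]; norm_num⟩
  obtain ⟨C₀, D₀, hK₀b⟩ := L26_tau_minmax_on T hK₀c hK₀ne
  set K₁ : Set (Vec n) := {p | p.1 = t₀ ∧ ‖p.2‖ ≤ 1} with hK₁def
  have hK₁c : IsCompact K₁ := by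
    apply L26_compact_of _ ?_ (|t₀| + 1)
    · intro p hp
      rw [Prod.norm_def]
      apply max_le
      · rw [Real.norm_eq_abs, hp.1]; linarith
      · have := abs_nonneg t₀; linarith [hp.2]
    · exact (isClosed_eq continuous_fst continuous_const).inter
        (isClosed_le (continuous_norm.comp continuous_snd) continuous_const)
  have hK₁ne : K₁.Nonempty := ⟨(t₀, 0), rfl, by simp⟩
  obtain ⟨C₁, D₁, hK₁b⟩ := L26_tau_minmax_on T hK₁c hK₁ne
  -- annulus bounds
  have hannLB : ∀ p : Vec n, t₀ ≤ p.1 → 1 ≤ ‖p.2‖ → ‖p.2‖ ≤ 3 → C₀ ≤ T.τ p := by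
    intro p h1 h2 h3
    have hmono := (L26_tau_vline_strictMono h11 T (x := p.2) h2).monotone h1
    have hK : ((t₀, p.2) : Vec n) ∈ K₀ := ⟨rfl, h2, h3⟩
    have := (hK₀b _ hK).1
    have hp : ((p.1, p.2) : Vec n) = p := Prod.mk.eta
    rw [hp] at hmono
    linarith
  have hannUB : ∀ p : Vec n, p.1 ≤ t₀ → 1 ≤ ‖p.2‖ → ‖p.2‖ ≤ 3 → T.τ p ≤ D₀ := by
    intro p h1 h2 h3
    have hmono := (L26_tau_vline_strictMono h11 T (x := p.2) h2).monotone h1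
    have hK : ((t₀, p.2) : Vec n) ∈ K₀ := ⟨rfl, h2, h3⟩
    have := (hK₀b _ hK).2
    have hp : ((p.1, p.2) : Vec n) = p := Prod.mk.eta
    rw [hp] at hmono
    linarith
  rcases hsgn with hAbove | hBelow
  · -- ===================== case: the curve stays above the slice =====================
    set c : ℝ := min C₀ C₁ with hcdef
    obtain ⟨σ₁, hσ₁I, hσ₁v⟩ := hSurj (c - 1)
    obtain ⟨σ₂, hσ₂I, hσ₂v⟩ := hSurj (c - 2)
    set S : Set ℝ := {s | s ∈ erealIoo a b ∧ T.τ (γ s) ≤ c - 1} with hSdef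
    have hσ₁S : σ₁ ∈ S := ⟨hσ₁I, by rw [hσ₁v]⟩
    have hσ₂S : σ₂ ∈ S := ⟨hσ₂I, by rw [hσ₂v]; linarith⟩
    have hSIcc : ∀ x ∈ S, ∀ y ∈ S, Icc x y ⊆ S := by
      intro x hx y hy z hz
      have hzI := hIcc x hx.1 y hy.1 hz
      refine ⟨hzI, ?_⟩
      rcases hMono with hm | hm
      · exact le_trans (hm.monotoneOn hzI hy.1 hz.2) hy.2
      · exact le_trans (hm.antitoneOn hx.1 hzI hz.1) hx.2
    have hfar0 : ∀ s ∈ S, ‖(γ s).2‖ < 1 ∨ 3 < ‖(γ s).2‖ := by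
      intro s hs
      by_contra h
      push_neg at h
      have hlb := hannLB (γ s) (hAbove s hs.1).le h.1 h.2
      have h2 := hs.2
      have := min_le_left C₀ C₁
      linarith
    have hcase : (∀ s ∈ S, ‖(γ s).2‖ < 1) ∨ (∀ s ∈ S, 3 < ‖(γ s).2‖) := by
      by_contra h
      push_neg at h
      obtain ⟨⟨s₁, hs₁, hs₁'⟩, ⟨s₂, hs₂, hs₂'⟩⟩ := h
      have h₁ : 3 < ‖(γ s₁).2‖ := (hfar0 s₁ hs₁).resolve_left (not_lt.2 hs₁')
      have h₂ : ‖(γ s₂).2‖ < 1 := (hfar0 s₂ hs₂).resolve_right (not_lt.2 hs₂')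
      have hsubS : uIcc s₂ s₁ ⊆ S := by
        rw [uIcc]
        apply hSIcc
        · rcases min_choice s₂ s₁ with h' | h' <;> rw [h'] <;> assumption
        · rcases max_choice s₂ s₁ with h' | h' <;> rw [h'] <;> assumption
      have hsubI : uIcc s₂ s₁ ⊆ erealIoo a b := fun z hz => (hsubS hz).1
      have hcont' : ContinuousOn (fun u => ‖(γ u).2‖) (uIcc s₂ s₁) :=
        (continuous_norm.comp continuous_snd).comp_continuousOn (hgc.mono hsubI)
      have h2m : (2 : ℝ) ∈ uIcc ‖(γ s₂).2‖ ‖(γ s₁).2‖ := by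
        rw [mem_uIcc]; left; constructor <;> linarith
      obtain ⟨u, hu, hu'⟩ := intermediate_value_uIcc hcont' h2m
      have hu'' : ‖(γ u).2‖ = 2 := hu'
      rcases hfar0 u (hsubS hu) with h' | h' <;> rw [hu''] at h' <;> linarith
    rcases hcase with hcyl | hfar
    · -- cylinder subcase
      obtain ⟨u, ⟨_, huv⟩, _⟩ := T.level_cauchy (c - 2) (fun t => ((t, x₂) : Vec n)) ⊥ ⊤
        (L26_vline_inext h11 (by rw [hx₂]; norm_num))
      have huv' : T.τ (u, x₂) = c - 2 := huv
      have hut : u < t₀ := by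
        by_contra hcn
        push_neg at hcn
        have hmono := (L26_tau_vline_strictMono h11 T
          (x := x₂) (by rw [hx₂]; norm_num)).monotone hcn
        have hK : ((t₀, x₂) : Vec n) ∈ K₀ := ⟨rfl, by rw [hx₂]; norm_num, by rw [hx₂]; norm_num⟩
        have := (hK₀b _ hK).1
        have := min_le_left C₀ C₁
        linarith [huv']
      have hann' : ∀ p : Vec n, t₀ ≤ p.1 → 1 ≤ ‖p.2‖ → ‖p.2‖ ≤ 3 → T.τ p ≠ c - 2 := by
        intro p h1 h2 h3 hh
        have := hannLB p h1 h2 h3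
        rw [hh] at this
        have := min_le_left C₀ C₁
        linarith
      obtain ⟨q, hq1, hq2, hq3⟩ := L26_sigma_above T (P := γ σ₂) (w := ((u, x₂) : Vec n))
        hσ₂v (hAbove σ₂ hσ₂I) (hcyl σ₂ hσ₂S) huv' hut hann'
      have hK : q ∈ K₁ := ⟨hq1, hq2⟩
      have := (hK₁b q hK).1
      rw [hq3] at this
      have := min_le_right C₀ C₁
      linarith
    · -- far subcase
      have hfar1 : ∀ s ∈ S, 1 < ‖(γ s).2‖ := fun s hs => lt_trans (by norm_num) (hfar s hs)
      have hkeyτ : ∀ x ∈ S, ∀ y ∈ S, x < y → ε * T.τ (γ x) < ε * T.τ (γ y) := by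
        intro x hx y hy hxy
        have hsub : Icc x y ⊆ S := hSIcc x hx y hy
        exact L26_glue (hPD x hx.1 y hy.1 hxy) (fun p => ε * T.τ p)
          (fun q => ε • fderiv ℝ T.τ q)
          (fun q => (((T.smooth.differentiable (by simp)) q).hasFDerivAt).const_mul ε)
          (by
            intro r hr v hv
            have hrS : r ∈ S := hsub hr
            obtain ⟨h1, h2⟩ := hd _ _ hv
            obtain ⟨hmv, hsv⟩ := L26_far_dir h11 (hfar1 r hrS) h1 h2
            have := L26_far_fderiv_tau h11 T (hfar1 r hrS) hε hmv hsv
            simpa using this)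
      have hkeyL : ∀ ξ : Evec n, ‖ξ‖ ≤ 1 → ∀ x ∈ S, ∀ y ∈ S, x < y →
          ε * (γ x).1 + ⟪(γ x).2, ξ⟫ < ε * (γ y).1 + ⟪(γ y).2, ξ⟫ := by
        intro ξ hξ x hx y hy hxy
        have hsub : Icc x y ⊆ S := hSIcc x hx y hy
        exact L26_glue (hPD x hx.1 y hy.1 hxy) _ (fun _ => L26lin n ε ξ)
          (fun q => L26lin_hasFDerivAt ε ξ q)
          (by
            intro r hr v hv
            have hrS : r ∈ S := hsub hr
            obtain ⟨h1, h2⟩ := hd _ _ hv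
            obtain ⟨hmv, hsv⟩ := L26_far_dir h11 (hfar1 r hrS) h1 h2
            exact L26_lin_pos hξ hmv hsv hε)
      -- reference point and side
      have hbox : ∀ s ∈ S, |(γ s).1| ≤ max |t₀| |(γ σ₁).1| ∧
          ‖(γ s).2 - (γ σ₁).2‖ ≤ |t₀ - (γ σ₁).1| := by
        have honeside : (ε = 1 ∧ ∀ s ∈ S, s ≤ σ₁) ∨ (ε = -1 ∧ ∀ s ∈ S, σ₁ ≤ s) := by
          rcases hMono with hm | hm
          · left
            have hσord : σ₂ < σ₁ := by
              rcases lt_trichotomy σ₂ σ₁ with h | h | h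
              · exact h
              · exfalso; rw [h, hσ₁v] at hσ₂v; linarith
              · exfalso
                have h2 : T.τ (γ σ₁) < T.τ (γ σ₂) := hm hσ₁I hσ₂I h
                rw [hσ₁v, hσ₂v] at h2; linarith
            have hεval := hkeyτ σ₂ hσ₂S σ₁ hσ₁S hσord
            rw [hσ₁v, hσ₂v] at hεval
            have hε1 : ε = 1 := by
              rcases hε with h | h
              · exact h
              · exfalso; rw [h] at hεval; linarith
            refine ⟨hε1, fun s hs => ?_⟩
            by_contra hcn
            push_neg at hcn
            have h2 : T.τ (γ σ₁) < T.τ (γ s) := hm hσ₁I hs.1 hcn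
            rw [hσ₁v] at h2
            linarith [hs.2]
          · right
            have hσord : σ₁ < σ₂ := by
              rcases lt_trichotomy σ₁ σ₂ with h | h | h
              · exact h
              · exfalso; rw [← h, hσ₁v] at hσ₂v; linarith
              · exfalso
                have h2 : T.τ (γ σ₁) < T.τ (γ σ₂) := hm hσ₂I hσ₁I h
                rw [hσ₁v, hσ₂v] at h2; linarith
            have hεval := hkeyτ σ₁ hσ₁S σ₂ hσ₂S hσord
            rw [hσ₁v, hσ₂v] at hεval
            have hε1 : ε = -1 := by
              rcases hε with h | h
              · exfalso; rw [h] at hεval; linarith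
              · exact h
            refine ⟨hε1, fun s hs => ?_⟩
            by_contra hcn
            push_neg at hcn
            have h2 : T.τ (γ σ₁) < T.τ (γ s) := hm hs.1 hσ₁I hcn
            rw [hσ₁v] at h2
            linarith [hs.2]
        have ht₁ : t₀ < (γ σ₁).1 := hAbove σ₁ hσ₁I
        rcases honeside with ⟨hε1, hside⟩ | ⟨hε1, hside⟩
        · -- ε = 1, S to the left of σ₁, t increasing
          intro s hs
          have hts : t₀ < (γ s).1 := hAbove s hs.1
          rcases eq_or_lt_of_le (hside s hs) with h | h
          · rw [h]
            constructor
            · exact le_max_right _ _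
            · simp only [sub_self, norm_zero]
              exact abs_nonneg _
          · have htle : (γ s).1 < (γ σ₁).1 := by
              have := hkeyL 0 (by simp) s hs σ₁ hσ₁S h
              simp only [inner_zero_right, add_zero, hε1, one_mul] at this
              linarith
            constructor
            · rw [abs_le]
              constructor
              · have := neg_abs_le t₀
                have := le_max_left |t₀| |(γ σ₁).1|
                linarith
              · have := le_abs_self (γ σ₁).1
                have := le_max_right |t₀| |(γ σ₁).1|
                linarith
            · set w : Evec n := (γ s).2 - (γ σ₁).2 with hwdef
              by_cases hw : w = 0
              · rw [hw]
                simp only [norm_zero]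
                rw [abs_sub_comm, abs_of_pos (by linarith)]
                linarith
              · obtain ⟨hip, hun⟩ := L26_unit_inner hw
                have := hkeyL (‖w‖⁻¹ • w) hun.le s hs σ₁ hσ₁S h
                rw [hε1, one_mul, one_mul] at this
                have hsub : ⟪(γ s).2, ‖w‖⁻¹ • w⟫ - ⟪(γ σ₁).2, ‖w‖⁻¹ • w⟫ = ‖w‖ := by
                  rw [← inner_sub_left, ← hwdef, hip]
                rw [abs_sub_comm, abs_of_pos (by linarith)]
                linarith
        · -- ε = -1, S to the right of σ₁, t decreasing
          intro s hs
          have hts : t₀ < (γ s).1 := hAbove s hs.1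
          rcases eq_or_lt_of_le (hside s hs) with h | h
          · rw [← h]
            constructor
            · exact le_max_right _ _
            · simp only [sub_self, norm_zero]
              exact abs_nonneg _
          · have htle : (γ s).1 < (γ σ₁).1 := by
              have := hkeyL 0 (by simp) σ₁ hσ₁S s hs h
              simp only [inner_zero_right, add_zero, hε1] at this
              nlinarith
            constructor
            · rw [abs_le]
              constructor
              · have := neg_abs_le t₀
                have := le_max_left |t₀| |(γ σ₁).1|
                linarith
              · have := le_abs_self (γ σ₁).1
                have := le_max_right |t₀| |(γ σ₁).1|
                linarith
            · set w : Evec n := (γ s).2 - (γ σ₁).2 with hwdef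
              by_cases hw : w = 0
              · rw [hw]
                simp only [norm_zero]
                rw [abs_sub_comm, abs_of_pos (by linarith)]
                linarith
              · obtain ⟨hip, hun⟩ := L26_unit_inner hw
                have hun' : ‖-(‖w‖⁻¹ • w)‖ ≤ 1 := by rw [norm_neg]; exact hun.le
                have := hkeyL (-(‖w‖⁻¹ • w)) hun' σ₁ hσ₁S s hs h
                rw [hε1] at this
                have hsub : ⟪(γ s).2, -(‖w‖⁻¹ • w)⟫ - ⟪(γ σ₁).2, -(‖w‖⁻¹ • w)⟫ = -‖w‖ := by
                  rw [← inner_sub_left, ← hwdef, inner_neg_right, hip]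
                rw [abs_sub_comm, abs_of_pos (by linarith)]
                nlinarith [hsub, this]
      -- trap in a compact box
      apply L26_box_trap T γ S (max |t₀| |(γ σ₁).1|) (|t₀ - (γ σ₁).1|) ((γ σ₁).2)
        (fun s hs => hbox s hs)
      intro m
      obtain ⟨sv, hsvI, hsvv⟩ := hSurj (min (c - 2) (-(|m| + 1)))
      have hsvS : sv ∈ S := ⟨hsvI, by rw [hsvv]; linarith [min_le_left (c - 2) (-(|m| + 1))]⟩
      refine ⟨sv, hsvS, ?_⟩
      rw [hsvv]
      intro hcontra
      have h1 : min (c - 2) (-(|m| + 1)) ≤ -(|m| + 1) := min_le_right _ _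
      have h2 := neg_le_abs (min (c - 2) (-(|m| + 1)))
      have h3 := le_abs_self m
      linarith [abs_le.1 hcontra]
  · -- ===================== case: the curve stays below the slice =====================
    set c : ℝ := max D₀ D₁ with hcdef
    obtain ⟨σ₁, hσ₁I, hσ₁v⟩ := hSurj (c + 1)
    obtain ⟨σ₂, hσ₂I, hσ₂v⟩ := hSurj (c + 2)
    set S : Set ℝ := {s | s ∈ erealIoo a b ∧ c + 1 ≤ T.τ (γ s)} with hSdef
    have hσ₁S : σ₁ ∈ S := ⟨hσ₁I, by rw [hσ₁v]⟩
    have hσ₂S : σ₂ ∈ S := ⟨hσ₂I, by rw [hσ₂v]; linarith⟩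
    have hSIcc : ∀ x ∈ S, ∀ y ∈ S, Icc x y ⊆ S := by
      intro x hx y hy z hz
      have hzI := hIcc x hx.1 y hy.1 hz
      refine ⟨hzI, ?_⟩
      rcases hMono with hm | hm
      · exact le_trans hx.2 (hm.monotoneOn hx.1 hzI hz.1)
      · exact le_trans hy.2 (hm.antitoneOn hzI hy.1 hz.2)
    have hfar0 : ∀ s ∈ S, ‖(γ s).2‖ < 1 ∨ 3 < ‖(γ s).2‖ := by
      intro s hs
      by_contra h
      push_neg at h
      have hlb := hannUB (γ s) (hBelow s hs.1).le h.1 h.2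
      have h2 := hs.2
      have := le_max_left D₀ D₁
      linarith
    have hcase : (∀ s ∈ S, ‖(γ s).2‖ < 1) ∨ (∀ s ∈ S, 3 < ‖(γ s).2‖) := by
      by_contra h
      push_neg at h
      obtain ⟨⟨s₁, hs₁, hs₁'⟩, ⟨s₂, hs₂, hs₂'⟩⟩ := h
      have h₁ : 3 < ‖(γ s₁).2‖ := (hfar0 s₁ hs₁).resolve_left (not_lt.2 hs₁')
      have h₂ : ‖(γ s₂).2‖ < 1 := (hfar0 s₂ hs₂).resolve_right (not_lt.2 hs₂')
      have hsubS : uIcc s₂ s₁ ⊆ S := by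
        rw [uIcc]
        apply hSIcc
        · rcases min_choice s₂ s₁ with h' | h' <;> rw [h'] <;> assumption
        · rcases max_choice s₂ s₁ with h' | h' <;> rw [h'] <;> assumption
      have hsubI : uIcc s₂ s₁ ⊆ erealIoo a b := fun z hz => (hsubS hz).1
      have hcont' : ContinuousOn (fun u => ‖(γ u).2‖) (uIcc s₂ s₁) :=
        (continuous_norm.comp continuous_snd).comp_continuousOn (hgc.mono hsubI)
      have h2m : (2 : ℝ) ∈ uIcc ‖(γ s₂).2‖ ‖(γ s₁).2‖ := by
        rw [mem_uIcc]; left; constructor <;> linarith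
      obtain ⟨u, hu, hu'⟩ := intermediate_value_uIcc hcont' h2m
      have hu'' : ‖(γ u).2‖ = 2 := hu'
      rcases hfar0 u (hsubS hu) with h' | h' <;> rw [hu''] at h' <;> linarith
    rcases hcase with hcyl | hfar
    · -- cylinder subcase
      obtain ⟨u, ⟨_, huv⟩, _⟩ := T.level_cauchy (c + 2) (fun t => ((t, x₂) : Vec n)) ⊥ ⊤
        (L26_vline_inext h11 (by rw [hx₂]; norm_num))
      have huv' : T.τ (u, x₂) = c + 2 := huv
      have hut : t₀ < u := by
        by_contra hcn
        push_neg at hcn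
        have hmono := (L26_tau_vline_strictMono h11 T
          (x := x₂) (by rw [hx₂]; norm_num)).monotone hcn
        have hK : ((t₀, x₂) : Vec n) ∈ K₀ := ⟨rfl, by rw [hx₂]; norm_num, by rw [hx₂]; norm_num⟩
        have := (hK₀b _ hK).2
        have := le_max_left D₀ D₁
        linarith [huv']
      have hann' : ∀ p : Vec n, p.1 ≤ t₀ → 1 ≤ ‖p.2‖ → ‖p.2‖ ≤ 3 → T.τ p ≠ c + 2 := by
        intro p h1 h2 h3 hh
        have := hannUB p h1 h2 h3
        rw [hh] at this
        have := le_max_left D₀ D₁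
        linarith
      obtain ⟨q, hq1, hq2, hq3⟩ := L26_sigma_below T (P := γ σ₂) (w := ((u, x₂) : Vec n))
        hσ₂v (hBelow σ₂ hσ₂I) (hcyl σ₂ hσ₂S) huv' hut hann'
      have hK : q ∈ K₁ := ⟨hq1, hq2⟩
      have := (hK₁b q hK).2
      rw [hq3] at this
      have := le_max_right D₀ D₁
      linarith
    · -- far subcase
      have hfar1 : ∀ s ∈ S, 1 < ‖(γ s).2‖ := fun s hs => lt_trans (by norm_num) (hfar s hs)
      have hkeyτ : ∀ x ∈ S, ∀ y ∈ S, x < y → ε * T.τ (γ x) < ε * T.τ (γ y) := by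
        intro x hx y hy hxy
        have hsub : Icc x y ⊆ S := hSIcc x hx y hy
        exact L26_glue (hPD x hx.1 y hy.1 hxy) (fun p => ε * T.τ p)
          (fun q => ε • fderiv ℝ T.τ q)
          (fun q => (((T.smooth.differentiable (by simp)) q).hasFDerivAt).const_mul ε)
          (by
            intro r hr v hv
            have hrS : r ∈ S := hsub hr
            obtain ⟨h1, h2⟩ := hd _ _ hv
            obtain ⟨hmv, hsv⟩ := L26_far_dir h11 (hfar1 r hrS) h1 h2
            have := L26_far_fderiv_tau h11 T (hfar1 r hrS) hε hmv hsv
            simpa using this)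
      have hkeyL : ∀ ξ : Evec n, ‖ξ‖ ≤ 1 → ∀ x ∈ S, ∀ y ∈ S, x < y →
          ε * (γ x).1 + ⟪(γ x).2, ξ⟫ < ε * (γ y).1 + ⟪(γ y).2, ξ⟫ := by
        intro ξ hξ x hx y hy hxy
        have hsub : Icc x y ⊆ S := hSIcc x hx y hy
        exact L26_glue (hPD x hx.1 y hy.1 hxy) _ (fun _ => L26lin n ε ξ)
          (fun q => L26lin_hasFDerivAt ε ξ q)
          (by
            intro r hr v hv
            have hrS : r ∈ S := hsub hr
            obtain ⟨h1, h2⟩ := hd _ _ hv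
            obtain ⟨hmv, hsv⟩ := L26_far_dir h11 (hfar1 r hrS) h1 h2
            exact L26_lin_pos hξ hmv hsv hε)
      have hbox : ∀ s ∈ S, |(γ s).1| ≤ max |t₀| |(γ σ₁).1| ∧
          ‖(γ s).2 - (γ σ₁).2‖ ≤ |t₀ - (γ σ₁).1| := by
        have honeside : (ε = 1 ∧ ∀ s ∈ S, σ₁ ≤ s) ∨ (ε = -1 ∧ ∀ s ∈ S, s ≤ σ₁) := by
          rcases hMono with hm | hm
          · left
            have hσord : σ₁ < σ₂ := by
              rcases lt_trichotomy σ₁ σ₂ with h | h | h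
              · exact h
              · exfalso; rw [← h, hσ₁v] at hσ₂v; linarith
              · exfalso
                have h2 : T.τ (γ σ₂) < T.τ (γ σ₁) := hm hσ₂I hσ₁I h
                rw [hσ₁v, hσ₂v] at h2; linarith
            have hεval := hkeyτ σ₁ hσ₁S σ₂ hσ₂S hσord
            rw [hσ₁v, hσ₂v] at hεval
            have hε1 : ε = 1 := by
              rcases hε with h | h
              · exact h
              · exfalso; rw [h] at hεval; linarith
            refine ⟨hε1, fun s hs => ?_⟩
            by_contra hcn
            push_neg at hcn
            have h2 : T.τ (γ s) < T.τ (γ σ₁) := hm hs.1 hσ₁I hcn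
            rw [hσ₁v] at h2
            linarith [hs.2]
          · right
            have hσord : σ₂ < σ₁ := by
              rcases lt_trichotomy σ₂ σ₁ with h | h | h
              · exact h
              · exfalso; rw [h, hσ₁v] at hσ₂v; linarith
              · exfalso
                have h2 : T.τ (γ σ₂) < T.τ (γ σ₁) := hm hσ₁I hσ₂I h
                rw [hσ₁v, hσ₂v] at h2; linarith
            have hεval := hkeyτ σ₂ hσ₂S σ₁ hσ₁S hσord
            rw [hσ₁v, hσ₂v] at hεval
            have hε1 : ε = -1 := by
              rcases hε with h | h
              · exfalso; rw [h] at hεval; linarith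
              · exact h
            refine ⟨hε1, fun s hs => ?_⟩
            by_contra hcn
            push_neg at hcn
            have h2 : T.τ (γ s) < T.τ (γ σ₁) := hm hσ₁I hs.1 hcn
            rw [hσ₁v] at h2
            linarith [hs.2]
        have ht₁ : (γ σ₁).1 < t₀ := hBelow σ₁ hσ₁I
        rcases honeside with ⟨hε1, hside⟩ | ⟨hε1, hside⟩
        · -- ε = 1, S to the right of σ₁, t increasing
          intro s hs
          have hts : (γ s).1 < t₀ := hBelow s hs.1
          rcases eq_or_lt_of_le (hside s hs) with h | h
          · rw [← h]
            constructor
            · exact le_max_right _ _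
            · simp only [sub_self, norm_zero]
              exact abs_nonneg _
          · have htle : (γ σ₁).1 < (γ s).1 := by
              have := hkeyL 0 (by simp) σ₁ hσ₁S s hs h
              simp only [inner_zero_right, add_zero, hε1, one_mul] at this
              linarith
            constructor
            · rw [abs_le]
              constructor
              · have := neg_abs_le (γ σ₁).1
                have := le_max_right |t₀| |(γ σ₁).1|
                linarith
              · have := le_abs_self t₀
                have := le_max_left |t₀| |(γ σ₁).1|
                linarith
            · set w : Evec n := (γ s).2 - (γ σ₁).2 with hwdef
              by_cases hw : w = 0
              · rw [hw]
                simp only [norm_zero]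
                rw [abs_of_pos (by linarith)]
                linarith
              · obtain ⟨hip, hun⟩ := L26_unit_inner hw
                have hun' : ‖-(‖w‖⁻¹ • w)‖ ≤ 1 := by rw [norm_neg]; exact hun.le
                have := hkeyL (-(‖w‖⁻¹ • w)) hun' σ₁ hσ₁S s hs h
                rw [hε1, one_mul, one_mul] at this
                have hsub : ⟪(γ s).2, -(‖w‖⁻¹ • w)⟫ - ⟪(γ σ₁).2, -(‖w‖⁻¹ • w)⟫ = -‖w‖ := by
                  rw [← inner_sub_left, ← hwdef, inner_neg_right, hip]
                rw [abs_of_pos (by linarith)]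
                nlinarith [hsub, this]
        · -- ε = -1, S to the left of σ₁, t decreasing
          intro s hs
          have hts : (γ s).1 < t₀ := hBelow s hs.1
          rcases eq_or_lt_of_le (hside s hs) with h | h
          · rw [h]
            constructor
            · exact le_max_right _ _
            · simp only [sub_self, norm_zero]
              exact abs_nonneg _
          · have htle : (γ σ₁).1 < (γ s).1 := by
              have := hkeyL 0 (by simp) s hs σ₁ hσ₁S h
              simp only [inner_zero_right, add_zero, hε1] at this
              nlinarith
            constructor
            · rw [abs_le]
              constructor
              · have := neg_abs_le (γ σ₁).1
                have := le_max_right |t₀| |(γ σ₁).1|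
                linarith
              · have := le_abs_self t₀
                have := le_max_left |t₀| |(γ σ₁).1|
                linarith
            · set w : Evec n := (γ s).2 - (γ σ₁).2 with hwdef
              by_cases hw : w = 0
              · rw [hw]
                simp only [norm_zero]
                rw [abs_of_pos (by linarith)]
                linarith
              · obtain ⟨hip, hun⟩ := L26_unit_inner hw
                have := hkeyL (‖w‖⁻¹ • w) hun.le s hs σ₁ hσ₁S h
                rw [hε1] at this
                have hsub : ⟪(γ s).2, ‖w‖⁻¹ • w⟫ - ⟪(γ σ₁).2, ‖w‖⁻¹ • w⟫ = ‖w‖ := by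
                  rw [← inner_sub_left, ← hwdef, hip]
                rw [abs_of_pos (by linarith)]
                nlinarith [hsub, this]
      apply L26_box_trap T γ S (max |t₀| |(γ σ₁).1|) (|t₀ - (γ σ₁).1|) ((γ σ₁).2)
        (fun s hs => hbox s hs)
      intro m
      obtain ⟨sv, hsvI, hsvv⟩ := hSurj (max (c + 2) (|m| + 1))
      have hsvS : sv ∈ S := ⟨hsvI, by rw [hsvv]; linarith [le_max_left (c + 2) (|m| + 1)]⟩
      refine ⟨sv, hsvS, ?_⟩
      rw [hsvv]
      intro hcontra
      have h1 : |m| + 1 ≤ max (c + 2) (|m| + 1) := le_max_right _ _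
      have h2 := le_abs_self (max (c + 2) (|m| + 1))
      have h3 := le_abs_self m
      linarith [abs_le.1 hcontra]

end Master

/-- Lemma 2.6: every inextendible timelike curve meets every time slice {t = t₀}. -/
theorem inextendible_timelike_meets_time_slice (n : ℕ) (hn : 2 ≤ n)
    (M : LorentzMetric n) (O : TimeOrientation M)
    (h11 : Cond11 M O) (hGH : CondGH M O) :
    ∀ t₀ : ℝ, ∀ (γ : ℝ → Vec n) (a b : EReal), InextTimelike M O γ a b →
      ∃ r ∈ erealIoo a b, (γ r).1 = t₀ := by
  intro t₀ γ a b hγ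
  by_contra hcon
  push_neg at hcon
  obtain ⟨hGH1, hGH2, ⟨T⟩⟩ := hGH
  have hn0 : 0 < n := by omega
  rcases hγ.1.2 with hF | hP
  · exact L26_master h11 T hn0 t₀ γ a b hγ (ε := 1) (Or.inl rfl)
      (fun c d hc hd hcd => hF c d hc hd hcd)
      (fun p v hv => ⟨hv.1, by linarith [hv.2]⟩) hcon
  · exact L26_master h11 T hn0 t₀ γ a b hγ (ε := -1) (Or.inr rfl)
      (fun c d hc hd hcd => hP c d hc hd hcd)
      (fun p v hv => ⟨hv.1, by linarith [hv.2]⟩) hcon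

end
end

section
/- Let g be a Lorentzian metric on ℝ^{1+n} satisfying condition (1.1), and let p_j = (t_j, x_j) ∈ ℝ × ∂B for j = 1, 2, where ∂B is the unit sphere of ℝ^n. If t₁ ≤ t₂ − π, then p₁ ≤ p₂. If g additionally satisfies condition (GH), then p₁ ≤ p₂ implies t₁ < t₂ + π. -/
noncomputable section

open Set Filter Topology
open scoped RealInnerProductSpace

variable {n : ℕ}

/-- On the closed exterior (‖x‖ ≥ 1), condition (1.1) still gives g = mink and Z = ∂ₜ,
by continuity. -/
lemma cond11_closed {n : ℕ} (M : LorentzMetric n) (O : TimeOrientation M) (h11 : Cond11 M O)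
    (p : Vec n) (hp : 1 ≤ ‖p.2‖) :
    (∀ v w, M.g p v w = mink v w) ∧ O.Z p = ((1 : ℝ), (0 : Evec n)) := by
  have hseq : Tendsto (fun k : ℕ => ((p.1, (1 + 1/(k+1 : ℝ)) • p.2) : Vec n)) atTop (nhds p) := by
    have h1 : Tendsto (fun k : ℕ => (1 + 1/(k+1 : ℝ))) atTop (nhds 1) := by
      have h0 : Tendsto (fun k : ℕ => 1/(k+1 : ℝ)) atTop (nhds 0) :=
        tendsto_one_div_add_atTop_nhds_zero_nat
      simpa using (tendsto_const_nhds (x := (1:ℝ)) (f := atTop)).add h0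
    have h2 : Tendsto (fun k : ℕ => (1 + 1/(k+1:ℝ)) • p.2) atTop (nhds ((1:ℝ) • p.2)) :=
      h1.smul tendsto_const_nhds
    rw [one_smul] at h2
    simpa using (tendsto_const_nhds (x := p.1) (f := atTop)).prodMk_nhds h2
  have hgt : ∀ k : ℕ, 1 < ‖((p.1, (1 + 1/(k+1:ℝ)) • p.2) : Vec n).2‖ := by
    intro k
    have hpos : (0:ℝ) < 1/(k+1:ℝ) := by positivity
    have hnorm : ‖(1 + 1/(k+1:ℝ)) • p.2‖ = (1 + 1/(k+1:ℝ)) * ‖p.2‖ := by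
      rw [norm_smul, Real.norm_of_nonneg (by positivity)]
    simp only [hnorm]
    nlinarith
  constructor
  · intro v w
    have hc : Continuous (fun q : Vec n => M.g q v w) :=
      ((M.smooth.continuous).clm_apply continuous_const).clm_apply continuous_const
    have ht1 := (hc.tendsto p).comp hseq
    have heq : (fun k : ℕ => M.g ((p.1, (1 + 1/(k+1:ℝ)) • p.2) : Vec n) v w)
        = fun _ : ℕ => mink v w := funext fun k => (h11 _ (hgt k)).1 v w
    have ht2 : Tendsto (fun _ : ℕ => mink v w) atTop (nhds (M.g p v w)) := by
      rw [← heq]; exact ht1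
    exact (tendsto_nhds_unique tendsto_const_nhds ht2).symm
  · have hc : Continuous O.Z := O.smooth.continuous
    have ht1 := (hc.tendsto p).comp hseq
    have heq : (fun k : ℕ => O.Z ((p.1, (1 + 1/(k+1:ℝ)) • p.2) : Vec n))
        = fun _ : ℕ => ((1:ℝ), (0 : Evec n)) := funext fun k => (h11 _ (hgt k)).2
    have ht2 : Tendsto (fun _ : ℕ => ((1:ℝ), (0:Evec n))) atTop (nhds (O.Z p)) := by
      rw [← heq]; exact ht1
    exact tendsto_nhds_unique ht2 tendsto_const_nhds

/-- For n ≥ 2, every vector has a unit vector orthogonal to it. -/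
lemma exists_unit_orthogonal {n : ℕ} (hn : 2 ≤ n) (x : Evec n) :
    ∃ u : Evec n, ‖u‖ = 1 ∧ ⟪x, u⟫ = 0 := by
  have hbot : ((ℝ ∙ x)ᗮ : Submodule ℝ (Evec n)) ≠ ⊥ := by
    intro hb
    have h1 : Module.finrank ℝ (ℝ ∙ x) + Module.finrank ℝ ((ℝ ∙ x)ᗮ : Submodule ℝ (Evec n))
        = Module.finrank ℝ (Evec n) := Submodule.finrank_add_finrank_orthogonal _
    have h2 : Module.finrank ℝ (Evec n) = n := finrank_euclideanSpace_fin
    have h3 : Module.finrank ℝ (ℝ ∙ x) ≤ 1 := by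
      rcases eq_or_ne x 0 with h0 | h0
      · rw [h0, Submodule.span_zero_singleton, finrank_bot]; exact Nat.zero_le 1
      · rw [finrank_span_singleton h0]
    have h4 : Module.finrank ℝ ((ℝ ∙ x)ᗮ : Submodule ℝ (Evec n)) = 0 := by
      rw [hb]; exact finrank_bot ℝ (Evec n)
    omega
  obtain ⟨v, hv, hv0⟩ := Submodule.exists_mem_ne_zero_of_ne_bot hbot
  have hvn : ‖v‖ ≠ 0 := norm_ne_zero_iff.2 hv0
  refine ⟨‖v‖⁻¹ • v, ?_, ?_⟩
  · rw [norm_smul, Real.norm_of_nonneg (by positivity), inv_mul_cancel₀ hvn]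
  · rw [real_inner_smul_right]
    have := (Submodule.mem_orthogonal _ v).1 hv x (Submodule.mem_span_singleton_self x)
    rw [this, mul_zero]
set_option maxHeartbeats 1600000 in
/-- The great-circle causal curve: if t₁ ≤ t₂ - π, there is a future-directed causal curve
from (t₁,x₁) to (t₂,x₂) staying on the boundary cylinder. -/
lemma exists_causal_curve {n : ℕ} (hn : 2 ≤ n) (M : LorentzMetric n) (O : TimeOrientation M)
    (h11 : Cond11 M O) (t₁ t₂ : ℝ) (x₁ x₂ : Evec n) (hx₁ : ‖x₁‖ = 1) (hx₂ : ‖x₂‖ = 1)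
    (ht : t₁ ≤ t₂ - Real.pi) :
    ∃ (γ : ℝ → Vec n) (a b : ℝ), FutureCausalOn M O γ a b ∧ γ a = (t₁, x₁) ∧ γ b = (t₂, x₂) := by
  have hd1 : |⟪x₁, x₂⟫| ≤ 1 := by
    have := abs_real_inner_le_norm x₁ x₂; rw [hx₁, hx₂] at this; simpa using this
  set d : ℝ := ⟪x₁, x₂⟫ with hd
  have hdle : d ≤ 1 := le_of_abs_le hd1
  have hdge : -1 ≤ d := neg_le_of_abs_le hd1
  set θ : ℝ := Real.arccos d with hθ
  have hcosθ : Real.cos θ = d := Real.cos_arccos hdge hdle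
  have hθ0 : 0 ≤ θ := Real.arccos_nonneg d
  have hθπ : θ ≤ Real.pi := Real.arccos_le_pi d
  have hx₁i : ⟪x₁, x₁⟫ = 1 := by
    rw [real_inner_self_eq_norm_mul_norm, hx₁, one_mul]
  have hx₂i : ⟪x₂, x₂⟫ = 1 := by
    rw [real_inner_self_eq_norm_mul_norm, hx₂, one_mul]
  -- find u : unit, orthogonal to x₁, with x₂ = cos θ • x₁ + sin θ • u
  obtain ⟨u, hu1, hux, hx₂eq⟩ : ∃ u : Evec n, ‖u‖ = 1 ∧ ⟪x₁, u⟫ = 0 ∧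
      x₂ = Real.cos θ • x₁ + Real.sin θ • u := by
    have hsinθ : Real.sin θ = Real.sqrt (1 - d^2) := Real.sin_arccos d
    have hsq : (0:ℝ) ≤ 1 - d^2 := by nlinarith [abs_nonneg d, sq_abs d]
    have hdiff : ⟪x₂ - d • x₁, x₂ - d • x₁⟫ = 1 - d^2 := by
      have hcomm : ⟪x₂, x₁⟫ = d := by rw [real_inner_comm]
      simp only [real_inner_sub_sub_self, real_inner_smul_left, real_inner_smul_right,
        hx₁i, hx₂i, hcomm]
      ring
    rcases eq_or_ne (Real.sin θ) 0 with hs0 | hs0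
    · -- degenerate: x₂ = d • x₁; pick any unit orthogonal vector
      have hd2 : 1 - d^2 = 0 := by
        have h2 : Real.sqrt (1 - d^2) = 0 := by rw [← hsinθ, hs0]
        have h3 := Real.sqrt_eq_zero'.1 h2
        linarith
      have hx₂x₁ : x₂ = d • x₁ := by
        have hz : x₂ - d • x₁ = 0 := by
          have hz := hdiff; rw [hd2] at hz
          exact inner_self_eq_zero.1 hz
        exact (sub_eq_zero.1 hz)
      obtain ⟨u, hu1, hux⟩ := exists_unit_orthogonal hn x₁
      exact ⟨u, hu1, hux, by rw [hcosθ, hs0, zero_smul, add_zero, hx₂x₁]⟩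
    · have hspos : 0 < Real.sin θ := by
        rcases (Real.sqrt_nonneg (1 - d^2)).lt_or_eq with h | h
        · rw [hsinθ]; exact h
        · exact absurd (hsinθ.trans h.symm) hs0
      refine ⟨(Real.sin θ)⁻¹ • (x₂ - d • x₁), ?_, ?_, ?_⟩
      · rw [norm_smul, Real.norm_of_nonneg (by positivity)]
        have hnn : ‖x₂ - d • x₁‖ = Real.sqrt (1 - d^2) := by
          rw [← Real.sqrt_sq (norm_nonneg _)]
          congr 1
          rw [← hdiff, real_inner_self_eq_norm_mul_norm]; ring
        rw [hnn, ← hsinθ, inv_mul_cancel₀ hs0]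
      · rw [real_inner_smul_right, inner_sub_right, real_inner_smul_right, hx₁i,
          ← hd, mul_one]
        ring
      · rw [hcosθ, smul_smul, mul_inv_cancel₀ hs0, one_smul]
        module
  -- the curve
  have hπ : (0:ℝ) < Real.pi := Real.pi_pos
  have hT : Real.pi ≤ t₂ - t₁ := by linarith
  have hTpos : (0:ℝ) < t₂ - t₁ := by linarith
  have h12 : t₁ < t₂ := by linarith
  set k : ℝ := θ / (t₂ - t₁) with hk
  have hk0 : 0 ≤ k := div_nonneg hθ0 (le_of_lt hTpos)
  have hk1 : k ≤ 1 := by rw [hk, div_le_one hTpos]; linarith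
  set c : ℝ → Evec n :=
    fun s => Real.cos (k * (s - t₁)) • x₁ + Real.sin (k * (s - t₁)) • u with hcdef
  set γ : ℝ → Vec n := fun s => (s, c s) with hγ
  have hui : ⟪u, u⟫ = 1 := by rw [real_inner_self_eq_norm_mul_norm, hu1, one_mul]
  have hip : ∀ a b : ℝ, ⟪a • x₁ + b • u, a • x₁ + b • u⟫ = a^2 + b^2 := by
    intro a b
    simp only [real_inner_add_add_self, real_inner_smul_left, real_inner_smul_right,
      hx₁i, hui, hux]
    ring
  have hcnorm : ∀ s : ℝ, ‖c s‖ = 1 := by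
    intro s
    have h1 : ⟪c s, c s⟫ = 1 := by
      simp only [hcdef]
      rw [hip]
      have := Real.sin_sq_add_cos_sq (k * (s - t₁)); nlinarith
    have h2 := real_inner_self_eq_norm_mul_norm (c s)
    have h3 : (‖c s‖ - 1) * (‖c s‖ + 1) = 0 := by nlinarith
    rcases mul_eq_zero.1 h3 with h | h
    · linarith
    · linarith [norm_nonneg (c s)]
  have hcderiv : ∀ s : ℝ, HasDerivAt c
      ((-Real.sin (k * (s - t₁)) * k) • x₁ + (Real.cos (k * (s - t₁)) * k) • u) s := by
    intro s
    have hf : HasDerivAt (fun s : ℝ => k * (s - t₁)) k s := by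
      simpa using ((hasDerivAt_id s).sub_const t₁).const_mul k
    have hcos : HasDerivAt (fun s : ℝ => Real.cos (k * (s - t₁)))
        (-Real.sin (k * (s - t₁)) * k) s := (Real.hasDerivAt_cos _).comp s hf
    have hsin : HasDerivAt (fun s : ℝ => Real.sin (k * (s - t₁)))
        (Real.cos (k * (s - t₁)) * k) s := (Real.hasDerivAt_sin _).comp s hf
    exact (hcos.smul_const x₁).add (hsin.smul_const u)
  have hderiv : ∀ s : ℝ, HasDerivAt γ
      ((1:ℝ), (-Real.sin (k * (s - t₁)) * k) • x₁ + (Real.cos (k * (s - t₁)) * k) • u) s :=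
    fun s => (hasDerivAt_id s).prodMk (hcderiv s)
  have hsmooth : ContDiff ℝ (⊤ : ℕ∞) γ := by
    have hf : ContDiff ℝ (⊤ : ℕ∞) (fun s : ℝ => k * (s - t₁)) :=
      contDiff_const.mul (contDiff_id.sub contDiff_const)
    exact contDiff_id.prodMk
      (((Real.contDiff_cos.comp hf).smul contDiff_const).add
        ((Real.contDiff_sin.comp hf).smul contDiff_const))
  refine ⟨γ, t₁, t₂, ⟨h12, 1, ![t₁, t₂], rfl, rfl, ?_, ?_⟩, ?_, ?_⟩
  · rw [Fin.strictMono_iff_lt_succ]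
    intro i
    fin_cases i
    simpa using h12
  · intro i
    fin_cases i
    show ContDiffOn ℝ (⊤ : ℕ∞) γ (Icc t₁ t₂) ∧
      ∀ r ∈ Icc t₁ t₂, FutureDir M O (γ r) (derivWithin γ (Icc t₁ t₂) r)
    refine ⟨hsmooth.contDiffOn, ?_⟩
    intro r hr
    have hdw : derivWithin γ (Icc t₁ t₂) r
        = ((1:ℝ), (-Real.sin (k * (r - t₁)) * k) • x₁ + (Real.cos (k * (r - t₁)) * k) • u) := by
      rw [(hderiv r).differentiableAt.derivWithin ((uniqueDiffOn_Icc h12) r hr)]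
      exact (hderiv r).deriv
    rw [hdw]
    have hb : 1 ≤ ‖(γ r).2‖ := le_of_eq (hcnorm r).symm
    obtain ⟨hgm, hZ⟩ := cond11_closed M O h11 (γ r) hb
    set A : ℝ := -Real.sin (k * (r - t₁)) * k with hA
    set B : ℝ := Real.cos (k * (r - t₁)) * k with hB
    have hAB : A^2 + B^2 ≤ 1 := by
      have hs := Real.sin_sq_add_cos_sq (k * (r - t₁))
      have hk2 : k^2 ≤ 1 := by nlinarith
      rw [hA, hB]; nlinarith [hs, hk2]
    refine ⟨⟨?_, ?_⟩, ?_⟩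
    · intro h0
      have := congrArg Prod.fst h0
      simp at this
    · rw [hgm]
      show -((1:ℝ) * 1) + ⟪A • x₁ + B • u, A • x₁ + B • u⟫ ≤ 0
      rw [hip]
      linarith
    · rw [hgm, hZ]
      show -((1:ℝ) * 1) + ⟪A • x₁ + B • u, (0 : Evec n)⟫ < 0
      rw [inner_zero_right]
      norm_num
  · rw [hγ, hcdef]
    simp
  · rw [hγ, hcdef]
    simp only
    have harg : k * (t₂ - t₁) = θ := by
      rw [hk, div_mul_cancel₀]; exact ne_of_gt hTpos
    rw [harg, ← hx₂eq]
set_option maxHeartbeats 1600000 in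
/-- Concatenation of piecewise causal curves. -/
lemma piecewiseDirOn_trans {n : ℕ} {Dir : Vec n → Vec n → Prop} {γ₁ γ₂ : ℝ → Vec n}
    {a₁ b₁ a₂ b₂ : ℝ} (h1 : PiecewiseDirOn Dir γ₁ a₁ b₁) (h2 : PiecewiseDirOn Dir γ₂ a₂ b₂)
    (hq : γ₁ b₁ = γ₂ a₂) :
    ∃ (γ : ℝ → Vec n) (b : ℝ), PiecewiseDirOn Dir γ a₁ b ∧ γ a₁ = γ₁ a₁ ∧ γ b = γ₂ b₂ := by
  obtain ⟨hab₁, k₁, s₁, hs₁0, hs₁l, hm₁, hp₁⟩ := h1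
  obtain ⟨hab₂, k₂, s₂, hs₂0, hs₂l, hm₂, hp₂⟩ := h2
  set c : ℝ := b₁ - a₂ with hc
  set γ : ℝ → Vec n := fun s => if s ≤ b₁ then γ₁ s else γ₂ (s - c) with hγ
  have hs₂0' : s₂ 0 + c = b₁ := by rw [hs₂0, hc]; ring
  set S : Fin (k₁ + k₂ + 1) → ℝ := fun i =>
    if h : i.val ≤ k₁ then s₁ ⟨i.val, Nat.lt_succ_of_le h⟩
    else s₂ ⟨i.val - k₁, by have := i.isLt; omega⟩ + c with hS
  have hSlow : ∀ (i : Fin (k₁ + k₂ + 1)) (h : i.val ≤ k₁),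
      S i = s₁ ⟨i.val, Nat.lt_succ_of_le h⟩ := fun i h => dif_pos h
  have hShigh : ∀ (i : Fin (k₁ + k₂ + 1)) (h : k₁ ≤ i.val),
      S i = s₂ ⟨i.val - k₁, by have := i.isLt; omega⟩ + c := by
    intro i h
    rcases eq_or_lt_of_le h with he | hlt
    · rw [hSlow i (le_of_eq he.symm)]
      have e1 : s₁ ⟨i.val, Nat.lt_succ_of_le (le_of_eq he.symm)⟩ = s₁ (Fin.last k₁) :=
        congrArg s₁ (Fin.ext (by simp only [Fin.val_last] <;> omega))
      have e2 : s₂ ⟨i.val - k₁, by have := i.isLt; omega⟩ = s₂ 0 :=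
        congrArg s₂ (Fin.ext (by simp only [Fin.val_zero] <;> omega))
      rw [e1, hs₁l, e2, hs₂0']
    · exact dif_neg (by omega)
  have hglue : ∀ r : ℝ, b₁ ≤ r → γ r = γ₂ (r - c) := by
    intro r hrb
    rcases eq_or_lt_of_le hrb with h | h
    · show (if r ≤ b₁ then γ₁ r else γ₂ (r - c)) = γ₂ (r - c)
      rw [if_pos (le_of_eq h.symm), ← h, hq]
      congr 1
      rw [hc]; ring
    · show (if r ≤ b₁ then γ₁ r else γ₂ (r - c)) = γ₂ (r - c)
      exact if_neg (not_le.2 h)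
  refine ⟨γ, b₂ + c, ⟨by rw [hc]; linarith, k₁ + k₂, S, ?_, ?_, ?_, ?_⟩, ?_, ?_⟩
  · have h0 : ((0 : Fin (k₁ + k₂ + 1))).val ≤ k₁ := by simp
    rw [hSlow 0 h0, ← hs₁0]
    exact congrArg s₁ (Fin.ext (by simp))
  · have hl : k₁ ≤ (Fin.last (k₁ + k₂)).val := by simp only [Fin.val_last] <;> omega
    rw [hShigh (Fin.last (k₁ + k₂)) hl, ← hs₂l]
    exact congrArg (fun x => x + c)
      (congrArg s₂ (Fin.ext (by simp only [Fin.val_last] <;> omega)))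
  · rw [Fin.strictMono_iff_lt_succ]
    intro i
    rcases lt_or_ge i.val k₁ with hi | hi
    · rw [hSlow i.castSucc (by simp only [Fin.coe_castSucc] <;> omega),
        hSlow i.succ (by simp only [Fin.val_succ] <;> omega)]
      exact hm₁ (Fin.mk_lt_mk.2 (by simp only [Fin.coe_castSucc, Fin.val_succ] <;> omega))
    · rw [hShigh i.castSucc (by simp only [Fin.coe_castSucc] <;> omega),
        hShigh i.succ (by simp only [Fin.val_succ] <;> omega)]
      have hlt := hm₂ (Fin.mk_lt_mk.2
        (by simp only [Fin.coe_castSucc, Fin.val_succ] <;> omega) :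
        (⟨i.castSucc.val - k₁, by have := i.castSucc.isLt; omega⟩ : Fin (k₂ + 1))
          < ⟨i.succ.val - k₁, by have := i.succ.isLt; omega⟩)
      exact add_lt_add_of_lt_of_le hlt (le_refl c)
  · intro i
    rcases lt_or_ge i.val k₁ with hi | hi
    · have hjc : (⟨i.val, hi⟩ : Fin k₁).castSucc.val = i.castSucc.val := by
        simp only [Fin.coe_castSucc]
      have hjs : (⟨i.val, hi⟩ : Fin k₁).succ.val = i.succ.val := by
        simp only [Fin.val_succ]
      have e1 : S i.castSucc = s₁ ((⟨i.val, hi⟩ : Fin k₁).castSucc) := by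
        rw [hSlow i.castSucc (by simp only [Fin.coe_castSucc] <;> omega)]
        exact congrArg s₁ (Fin.ext (by simp only [Fin.coe_castSucc]))
      have e2 : S i.succ = s₁ ((⟨i.val, hi⟩ : Fin k₁).succ) := by
        rw [hSlow i.succ (by simp only [Fin.val_succ] <;> omega)]
        exact congrArg s₁ (Fin.ext (by simp only [Fin.val_succ]))
      obtain ⟨hcd, hdir⟩ := hp₁ ⟨i.val, hi⟩
      have hsub : ∀ r ∈ Icc (s₁ (⟨i.val, hi⟩ : Fin k₁).castSucc)
          (s₁ (⟨i.val, hi⟩ : Fin k₁).succ), r ≤ b₁ := by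
        intro r hr
        have h1 : s₁ (⟨i.val, hi⟩ : Fin k₁).succ ≤ s₁ (Fin.last k₁) :=
          hm₁.monotone (Fin.le_last _)
        rw [hs₁l] at h1
        linarith [hr.2]
      have heq : EqOn γ γ₁ (Icc (s₁ (⟨i.val, hi⟩ : Fin k₁).castSucc)
          (s₁ (⟨i.val, hi⟩ : Fin k₁).succ)) := by
        intro r hr
        show (if r ≤ b₁ then γ₁ r else γ₂ (r - c)) = γ₁ r
        exact if_pos (hsub r hr)
      rw [e1, e2]
      refine ⟨hcd.congr (fun x hx => heq hx), ?_⟩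
      intro r hr
      rw [heq hr, derivWithin_congr heq (heq hr)]
      exact hdir r hr
    · have hjlt : i.val - k₁ < k₂ := by have := i.isLt; omega
      have e1 : S i.castSucc = s₂ ((⟨i.val - k₁, hjlt⟩ : Fin k₂).castSucc) + c := by
        rw [hShigh i.castSucc (by simp only [Fin.coe_castSucc] <;> omega)]
        exact congrArg (fun x => x + c)
          (congrArg s₂ (Fin.ext (by simp only [Fin.coe_castSucc] <;> omega)))
      have e2 : S i.succ = s₂ ((⟨i.val - k₁, hjlt⟩ : Fin k₂).succ) + c := by
        rw [hShigh i.succ (by simp only [Fin.val_succ] <;> omega)]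
        exact congrArg (fun x => x + c)
          (congrArg s₂ (Fin.ext (by simp only [Fin.val_succ] <;> omega)))
      obtain ⟨hcd, hdir⟩ := hp₂ ⟨i.val - k₁, hjlt⟩
      set j : Fin k₂ := ⟨i.val - k₁, hjlt⟩ with hj
      have hlt₂ : s₂ j.castSucc < s₂ j.succ := hm₂ (Fin.castSucc_lt_succ : j.castSucc < j.succ)
      have hmem : ∀ r ∈ Icc (s₂ j.castSucc + c) (s₂ j.succ + c),
          r - c ∈ Icc (s₂ j.castSucc) (s₂ j.succ) := by
        intro r hr
        exact ⟨by linarith [hr.1], by linarith [hr.2]⟩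
      have hge : ∀ r ∈ Icc (s₂ j.castSucc + c) (s₂ j.succ + c), b₁ ≤ r := by
        intro r hr
        have h0 : s₂ 0 ≤ s₂ j.castSucc := hm₂.monotone (Fin.zero_le _)
        have h1 := hr.1
        linarith
      have heq : EqOn γ (fun s => γ₂ (s - c)) (Icc (s₂ j.castSucc + c) (s₂ j.succ + c)) :=
        fun r hr => hglue r (hge r hr)
      rw [e1, e2]
      constructor
      · have hφ : ContDiffOn ℝ (⊤ : ℕ∞) (fun s : ℝ => s - c)
            (Icc (s₂ j.castSucc + c) (s₂ j.succ + c)) :=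
          (contDiff_id.sub contDiff_const).contDiffOn
        exact (hcd.comp hφ hmem).congr (fun x hx => heq hx)
      · intro r hr
        have hr₂ := hmem r hr
        have hdw : derivWithin γ (Icc (s₂ j.castSucc + c) (s₂ j.succ + c)) r
            = derivWithin γ₂ (Icc (s₂ j.castSucc) (s₂ j.succ)) (r - c) := by
          rw [derivWithin_congr heq (heq hr)]
          have hγ₂d : HasDerivWithinAt γ₂
              (derivWithin γ₂ (Icc (s₂ j.castSucc) (s₂ j.succ)) (r - c))
              (Icc (s₂ j.castSucc) (s₂ j.succ)) (r - c) :=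
            ((hcd.differentiableOn (by simp)) _ hr₂).hasDerivWithinAt
          have hφ : HasDerivWithinAt (fun s : ℝ => s - c) 1
              (Icc (s₂ j.castSucc + c) (s₂ j.succ + c)) r :=
            ((hasDerivAt_id r).sub_const c).hasDerivWithinAt
          have hcomp := hγ₂d.scomp r hφ hmem
          rw [one_smul] at hcomp
          exact hcomp.derivWithin
            ((uniqueDiffOn_Icc (by linarith : s₂ j.castSucc + c < s₂ j.succ + c)) r hr)
        rw [heq hr, hdw]
        exact hdir _ hr₂
  · show (if a₁ ≤ b₁ then γ₁ a₁ else γ₂ (a₁ - c)) = γ₁ a₁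
    exact if_pos (le_of_lt hab₁)
  · have hbc : ¬ (b₂ + c ≤ b₁) := by rw [hc]; push_neg; linarith
    show (if b₂ + c ≤ b₁ then γ₁ (b₂ + c) else γ₂ (b₂ + c - c)) = γ₂ b₂
    rw [if_neg hbc]
    congr 1
    ring
/-- Lemma 3.7: for points on the boundary cylinder ℝ × ∂B, t₁ ≤ t₂ − π implies p₁ ≤ p₂;
if moreover (GH) holds, then p₁ ≤ p₂ implies t₁ < t₂ + π. -/
theorem cylinder_boundary_causality (n : ℕ) (hn : 2 ≤ n)
    (M : LorentzMetric n) (O : TimeOrientation M) (h11 : Cond11 M O)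
    (t₁ t₂ : ℝ) (x₁ x₂ : Evec n) (hx₁ : ‖x₁‖ = 1) (hx₂ : ‖x₂‖ = 1) :
    (t₁ ≤ t₂ - Real.pi → CausalLE M O (t₁, x₁) (t₂, x₂)) ∧
    (CondGH M O → CausalLE M O (t₁, x₁) (t₂, x₂) → t₁ < t₂ + Real.pi) := by
  constructor
  · intro ht
    exact Or.inr (exists_causal_curve hn M O h11 t₁ t₂ x₁ x₂ hx₁ hx₂ ht)
  · intro hGH hLE
    by_contra hcon
    push_neg at hcon
    have hπ : (0:ℝ) < Real.pi := Real.pi_pos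
    obtain ⟨γ₂, a₂, b₂, hfc₂, ha₂, hb₂⟩ :=
      exists_causal_curve hn M O h11 t₂ t₁ x₂ x₁ hx₂ hx₁ (by linarith)
    rcases hLE with heq | ⟨γ₁, a₁, b₁, hfc₁, ha₁, hb₁⟩
    · have : t₁ = t₂ := congrArg Prod.fst heq
      linarith
    · have hq : γ₁ b₁ = γ₂ a₂ := by rw [hb₁, ha₂]
      obtain ⟨γ, b, hpc, hstart, hend⟩ := piecewiseDirOn_trans hfc₁ hfc₂ hq
      exact hGH.1 ⟨γ, a₁, b, Or.inl hpc, by rw [hstart, hend, ha₁, hb₂]⟩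

end
end
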